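/- arXiv:1208.4010 — 4 statements merged into one kernel-verified Lean document; each statement's English description precedes it below -/
import Mathlib

section
/- Application of the maximum principle: if (X,μ) is an irreducible BRW on a finite set X and z ∈ [0,1]^X satisfies z ≥ q̄ (pointwise) and G(z) ≥ z (pointwise), then the vector ẑ, defined by ẑ(x) := (z(x) − q̄(x))/(1 − q̄(x)) if q̄(x) < 1 and ẑ(x) := 1 if q̄(x) = 1, is constant on X. -/
open Filter

/-- The generating function of a (discrete-time) branching random walk. -/
noncomputable def brwGF {X : Type*} (μ : X → (X →₀ ℕ) → ℝ) (z : X → ℝ) (x : X) : ℝ :=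
  ∑' f : X →₀ ℕ, μ x f * ∏ y ∈ f.support, z y ^ f y

/-- The first-moment matrix of a BRW: `m_{xy} = Σ_f f(y) μ_x(f)`. -/
noncomputable def brwM {X : Type*} (μ : X → (X →₀ ℕ) → ℝ) (x y : X) : ℝ :=
  ∑' f : X →₀ ℕ, μ x f * (f y : ℝ)

/-- `x → y`: there is a finite (possibly empty) path along edges with positive
first-moment entries. -/
def brwReach {X : Type*} (μ : X → (X →₀ ℕ) → ℝ) : X → X → Prop :=
  Relation.ReflTransGen fun a b => 0 < brwM μ a b

section Aux

variable {X : Type*}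

lemma brw_summable_mu (μ : X → (X →₀ ℕ) → ℝ) (hμ1 : ∀ x, ∑' f, μ x f = 1) (x : X) :
    Summable (μ x) := by
  by_contra h
  have := hμ1 x
  rw [tsum_eq_zero_of_not_summable h] at this
  norm_num at this

lemma brw_prod_nonneg {z : X → ℝ} (hz : ∀ y, 0 ≤ z y) (f : X →₀ ℕ) :
    0 ≤ ∏ y ∈ f.support, z y ^ f y :=
  Finset.prod_nonneg fun y _ => pow_nonneg (hz y) _

lemma brw_prod_le_one {z : X → ℝ} (hz : ∀ y, z y ∈ Set.Icc (0:ℝ) 1) (f : X →₀ ℕ) :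
    ∏ y ∈ f.support, z y ^ f y ≤ 1 :=
  Finset.prod_le_one (fun y _ => pow_nonneg (hz y).1 _)
    (fun y _ => pow_le_one₀ (hz y).1 (hz y).2)

lemma brw_summable_term (μ : X → (X →₀ ℕ) → ℝ) (hμ0 : ∀ x f, 0 ≤ μ x f)
    (hμ1 : ∀ x, ∑' f, μ x f = 1) {z : X → ℝ} (hz : ∀ y, z y ∈ Set.Icc (0:ℝ) 1) (x : X) :
    Summable (fun f : X →₀ ℕ => μ x f * ∏ y ∈ f.support, z y ^ f y) :=
  Summable.of_nonneg_of_le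
    (fun f => mul_nonneg (hμ0 x f) (brw_prod_nonneg (fun y => (hz y).1) f))
    (fun f => mul_le_of_le_one_right (hμ0 x f) (brw_prod_le_one hz f))
    (brw_summable_mu μ hμ1 x)

lemma brw_GF_nonneg (μ : X → (X →₀ ℕ) → ℝ) (hμ0 : ∀ x f, 0 ≤ μ x f)
    {z : X → ℝ} (hz : ∀ y, 0 ≤ z y) (x : X) : 0 ≤ brwGF μ z x :=
  tsum_nonneg fun f => mul_nonneg (hμ0 x f) (brw_prod_nonneg hz f)

lemma brw_GF_le_one (μ : X → (X →₀ ℕ) → ℝ) (hμ0 : ∀ x f, 0 ≤ μ x f)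
    (hμ1 : ∀ x, ∑' f, μ x f = 1) {z : X → ℝ} (hz : ∀ y, z y ∈ Set.Icc (0:ℝ) 1) (x : X) :
    brwGF μ z x ≤ 1 := by
  rw [brwGF, ← hμ1 x]
  exact Summable.tsum_le_tsum (fun f => mul_le_of_le_one_right (hμ0 x f) (brw_prod_le_one hz f))
    (brw_summable_term μ hμ0 hμ1 hz x) (brw_summable_mu μ hμ1 x)

lemma brw_GF_mono (μ : X → (X →₀ ℕ) → ℝ) (hμ0 : ∀ x f, 0 ≤ μ x f)
    (hμ1 : ∀ x, ∑' f, μ x f = 1) {z z' : X → ℝ} (hz : ∀ y, z y ∈ Set.Icc (0:ℝ) 1)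
    (hz' : ∀ y, z' y ∈ Set.Icc (0:ℝ) 1) (hle : ∀ y, z y ≤ z' y) (x : X) :
    brwGF μ z x ≤ brwGF μ z' x := by
  rw [brwGF, brwGF]
  refine Summable.tsum_le_tsum (fun f => ?_) (brw_summable_term μ hμ0 hμ1 hz x)
    (brw_summable_term μ hμ0 hμ1 hz' x)
  exact mul_le_mul_of_nonneg_left
    (Finset.prod_le_prod (fun y _ => pow_nonneg (hz y).1 _)
      (fun y _ => pow_le_pow_left₀ (hz y).1 (hle y) _)) (hμ0 x f)

lemma brw_comb {β a b : ℝ} (hβ : β ∈ Set.Icc (0:ℝ) 1) (ha : a ∈ Set.Icc (0:ℝ) 1)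
    (hb : b ∈ Set.Icc (0:ℝ) 1) :
    ((1-β)*a + β) * ((1-β)*b + β) ≤ (1-β)*(a*b) + β := by
  obtain ⟨h1, h2⟩ := hβ; obtain ⟨h3, h4⟩ := ha; obtain ⟨h5, h6⟩ := hb
  nlinarith [mul_nonneg (mul_nonneg (mul_nonneg h1 (by linarith : (0:ℝ) ≤ 1 - β))
    (by linarith : (0:ℝ) ≤ 1 - a)) (by linarith : (0:ℝ) ≤ 1 - b)]

lemma brw_pow {β a : ℝ} (hβ : β ∈ Set.Icc (0:ℝ) 1) (ha : a ∈ Set.Icc (0:ℝ) 1) (k : ℕ) :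
    ((1-β)*a + β)^k ≤ (1-β)*a^k + β := by
  induction k with
  | zero => simp
  | succ n ih =>
    have h1 : ((1-β)*a+β) ∈ Set.Icc (0:ℝ) 1 := by
      constructor <;> nlinarith [ha.1, ha.2, hβ.1, hβ.2]
    have h2 : a^n ∈ Set.Icc (0:ℝ) 1 := ⟨pow_nonneg ha.1 _, pow_le_one₀ ha.1 ha.2⟩
    calc ((1-β)*a+β)^(n+1) = ((1-β)*a+β) * ((1-β)*a+β)^n := by ring
      _ ≤ ((1-β)*a+β) * ((1-β)*a^n+β) := mul_le_mul_of_nonneg_left ih h1.1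
      _ ≤ (1-β)*(a*a^n)+β := brw_comb hβ ha h2
      _ = (1-β)*a^(n+1)+β := by ring

lemma brw_prod_convex {β : ℝ} (hβ : β ∈ Set.Icc (0:ℝ) 1) {a : X → ℝ}
    (ha : ∀ y, a y ∈ Set.Icc (0:ℝ) 1) (f : X →₀ ℕ) (s : Finset X) :
    ∏ y ∈ s, ((1-β)*a y + β)^(f y) ≤ (1-β) * ∏ y ∈ s, a y ^ f y + β := by
  classical
  induction s using Finset.induction with
  | empty => simp
  | @insert c s hc ih =>
    rw [Finset.prod_insert hc, Finset.prod_insert hc]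
    have hP : (∏ y ∈ s, a y ^ f y) ∈ Set.Icc (0:ℝ) 1 :=
      ⟨Finset.prod_nonneg fun y _ => pow_nonneg (ha y).1 _,
       Finset.prod_le_one (fun y _ => pow_nonneg (ha y).1 _)
         (fun y _ => pow_le_one₀ (ha y).1 (ha y).2)⟩
    have hc1 : ((1-β)*a c+β) ∈ Set.Icc (0:ℝ) 1 := by
      constructor <;> nlinarith [(ha c).1, (ha c).2, hβ.1, hβ.2]
    have hck : ((1-β)*a c+β)^(f c) ≥ 0 := pow_nonneg hc1.1 _
    calc ((1-β)*a c+β)^(f c) * ∏ y ∈ s, ((1-β)*a y + β)^(f y)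
        ≤ ((1-β)*a c+β)^(f c) * ((1-β) * ∏ y ∈ s, a y ^ f y + β) :=
          mul_le_mul_of_nonneg_left ih hck
      _ ≤ ((1-β)*(a c)^(f c)+β) * ((1-β) * ∏ y ∈ s, a y ^ f y + β) := by
          refine mul_le_mul_of_nonneg_right (brw_pow hβ (ha c) _) ?_
          nlinarith [hP.1, hP.2, hβ.1, hβ.2]
      _ ≤ (1-β)*((a c)^(f c) * ∏ y ∈ s, a y ^ f y) + β :=
          brw_comb hβ ⟨pow_nonneg (ha c).1 _, pow_le_one₀ (ha c).1 (ha c).2⟩ hP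

lemma brw_tsum_eq_term {g h : (X →₀ ℕ) → ℝ} (hle : ∀ f, g f ≤ h f) (hg : Summable g)
    (hh : Summable h) (heq : ∑' f, g f = ∑' f, h f) (f : X →₀ ℕ) : g f = h f := by
  by_contra hne
  exact absurd heq (ne_of_lt (Summable.tsum_lt_tsum hle (lt_of_le_of_ne (hle f) hne) hg hh))

lemma brw_exists_pos {g : (X →₀ ℕ) → ℝ} (hg : ∀ f, 0 ≤ g f) (h : 0 < ∑' f, g f) :
    ∃ f, 0 < g f := by
  by_contra h'
  push_neg at h'
  have hz : g = fun _ => (0:ℝ) := funext fun f => le_antisymm (h' f) (hg f)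
  rw [hz] at h
  simp at h

lemma brw_qbar_fixed [Fintype X] (μ : X → (X →₀ ℕ) → ℝ) (hμ0 : ∀ x f, 0 ≤ μ x f)
    (hμ1 : ∀ x, ∑' f, μ x f = 1) (qbar : X → ℝ)
    (hqbar : ∀ x, Tendsto (fun n => (brwGF μ)^[n] (fun _ => 0) x) atTop (nhds (qbar x))) :
    (∀ x, qbar x ∈ Set.Icc (0:ℝ) 1) ∧ ∀ x, brwGF μ qbar x = qbar x := by
  set w : ℕ → X → ℝ := fun n => (brwGF μ)^[n] (fun _ => 0) with hw
  have hwsucc : ∀ n, w (n+1) = brwGF μ (w n) := fun n =>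
    Function.iterate_succ_apply' (brwGF μ) n _
  have hw01 : ∀ n x, w n x ∈ Set.Icc (0:ℝ) 1 := by
    intro n
    induction n with
    | zero => intro x; exact ⟨le_refl 0, zero_le_one⟩
    | succ n ih =>
      intro x
      rw [hwsucc n]
      exact ⟨brw_GF_nonneg μ hμ0 (fun y => (ih y).1) x, brw_GF_le_one μ hμ0 hμ1 ih x⟩
  have hmono : ∀ n x, w n x ≤ w (n+1) x := by
    intro n
    induction n with
    | zero => intro x; exact (hw01 1 x).1
    | succ n ih =>
      intro x
      rw [hwsucc n, hwsucc (n+1)]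
      exact brw_GF_mono μ hμ0 hμ1 (hw01 n) (hw01 (n+1)) ih x
  have hmono' : ∀ x, Monotone fun n => w n x := fun x =>
    monotone_nat_of_le_succ (fun n => hmono n x)
  have hle_q : ∀ n x, w n x ≤ qbar x := fun n x =>
    ge_of_tendsto (hqbar x) (eventually_atTop.2 ⟨n, fun m hm => hmono' x hm⟩)
  have hq01 : ∀ x, qbar x ∈ Set.Icc (0:ℝ) 1 := fun x =>
    ⟨ge_of_tendsto' (hqbar x) (fun n => (hw01 n x).1),
     le_of_tendsto' (hqbar x) (fun n => (hw01 n x).2)⟩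
  refine ⟨hq01, fun x => le_antisymm ?_ ?_⟩
  · -- brwGF μ qbar x ≤ qbar x
    rw [brwGF]
    refine Summable.tsum_le_of_sum_le (brw_summable_term μ hμ0 hμ1 hq01 x) (fun F => ?_)
    have htend : Tendsto (fun n => ∑ f ∈ F, μ x f * ∏ y ∈ f.support, w n y ^ f y) atTop
        (nhds (∑ f ∈ F, μ x f * ∏ y ∈ f.support, qbar y ^ f y)) := by
      refine tendsto_finset_sum F (fun f _ => Tendsto.const_mul _ ?_)
      exact tendsto_finset_prod _ (fun y _ => (hqbar y).pow _)
    refine le_of_tendsto' htend (fun n => ?_)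
    calc ∑ f ∈ F, μ x f * ∏ y ∈ f.support, w n y ^ f y
        ≤ ∑' f : X →₀ ℕ, μ x f * ∏ y ∈ f.support, w n y ^ f y :=
          Summable.sum_le_tsum F (fun f _ => mul_nonneg (hμ0 x f)
            (brw_prod_nonneg (fun y => (hw01 n y).1) f))
            (brw_summable_term μ hμ0 hμ1 (hw01 n) x)
      _ = w (n+1) x := by rw [hwsucc n]; rfl
      _ ≤ qbar x := hle_q (n+1) x
  · -- qbar x ≤ brwGF μ qbar x
    have htend : Tendsto (fun n => w (n+1) x) atTop (nhds (qbar x)) :=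
      (hqbar x).comp (tendsto_add_atTop_nat 1)
    refine le_of_tendsto' htend (fun n => ?_)
    rw [hwsucc n]
    exact brw_GF_mono μ hμ0 hμ1 (hw01 n) hq01 (fun y => hle_q n y) x

end Aux

/-- For an irreducible BRW on a finite set, `ẑ` is constant whenever `z ≥ q̄` and
`G(z) ≥ z` (application of the maximum principle). -/
theorem brw_maximum_principle_finite_irreducible_constant
    {X : Type*} [Fintype X] (μ : X → (X →₀ ℕ) → ℝ)
    (hμ0 : ∀ x f, 0 ≤ μ x f) (hμ1 : ∀ x, ∑' f, μ x f = 1)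
    (hirr : ∀ x y : X, brwReach μ x y)
    (qbar : X → ℝ)
    (hqbar : ∀ x, Tendsto (fun n => (brwGF μ)^[n] (fun _ => 0) x) atTop (nhds (qbar x)))
    (z : X → ℝ) (hz01 : ∀ x, z x ∈ Set.Icc (0 : ℝ) 1)
    (hzq : ∀ x, qbar x ≤ z x)
    (hGz : ∀ x, z x ≤ brwGF μ z x)
    (zhat : X → ℝ)
    (hzhat : ∀ x, zhat x = if qbar x < 1 then (z x - qbar x) / (1 - qbar x) else 1) :
    ∀ x y : X, zhat x = zhat y := by
  classical
  intro x y
  have hsummu := brw_summable_mu μ hμ1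
  obtain ⟨hq01, hqfix⟩ := brw_qbar_fixed μ hμ0 hμ1 qbar hqbar
  by_cases hcase : ∃ x0, qbar x0 = 1
  · -- some qbar = 1; then qbar ≡ 1 by irreducibility
    obtain ⟨x0, hx0⟩ := hcase
    have hprop : ∀ a b, qbar a = 1 → 0 < brwM μ a b → qbar b = 1 := by
      intro a b ha hm
      have heq : ∑' f : X →₀ ℕ, μ a f * ∏ y ∈ f.support, qbar y ^ f y = ∑' f, μ a f := by
        have := hqfix a
        rw [brwGF] at this
        rw [this, ha, hμ1 a]
      have hterm := brw_tsum_eq_term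
        (fun f => mul_le_of_le_one_right (hμ0 a f) (brw_prod_le_one hq01 f))
        (brw_summable_term μ hμ0 hμ1 hq01 a) (hsummu a) heq
      have hm' : 0 < ∑' f : X →₀ ℕ, μ a f * (f b : ℝ) := hm
      obtain ⟨f, hf⟩ := brw_exists_pos
        (fun f => mul_nonneg (hμ0 a f) (Nat.cast_nonneg _)) hm'
      have hμf : 0 < μ a f := by
        rcases lt_or_eq_of_le (hμ0 a f) with h | h
        · exact h
        · rw [← h] at hf; simp at hf
      have hfb : b ∈ f.support := by
        rw [Finsupp.mem_support_iff]
        intro h0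
        rw [h0] at hf; simp at hf
      have hprod1 : ∏ y ∈ f.support, qbar y ^ f y = 1 := by
        have h := hterm f
        have := mul_left_cancel₀ (ne_of_gt hμf) (by rw [h, mul_one] : μ a f * ∏ y ∈ f.support, qbar y ^ f y = μ a f * 1)
        exact this
      -- each factor equals 1
      have hfac : qbar b ^ f b = 1 := by
        by_contra hne
        have hlt : qbar b ^ f b < 1 := lt_of_le_of_ne (pow_le_one₀ (hq01 b).1 (hq01 b).2) hne
        have : ∏ y ∈ f.support, qbar y ^ f y < ∏ y ∈ f.support, (1:ℝ) ^ f y := by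
          refine Finset.prod_lt_prod ?_ ?_ ⟨b, hfb, by simpa using hlt⟩
          · intro i hi
            by_contra hnp
            push_neg at hnp
            have h0 : qbar i ^ f i = 0 := le_antisymm hnp (pow_nonneg (hq01 i).1 _)
            rw [Finset.prod_eq_zero hi h0] at hprod1
            norm_num at hprod1
          · intro i _; simpa using pow_le_one₀ (hq01 i).1 (hq01 i).2
        simp [hprod1] at this
      have hfbne : f b ≠ 0 := Finsupp.mem_support_iff.mp hfb
      by_contra hqb
      have hlt : qbar b < 1 := lt_of_le_of_ne (hq01 b).2 hqb
      have : qbar b ^ f b < 1 := pow_lt_one₀ (hq01 b).1 hlt hfbne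
      rw [hfac] at this
      exact lt_irrefl 1 this
    have hall : ∀ c, qbar c = 1 := by
      intro c
      have h := hirr x0 c
      induction h with
      | refl => exact hx0
      | tail _ h2 ih => exact hprop _ _ ih h2
    have hzh1 : ∀ c, zhat c = 1 := fun c => by
      rw [hzhat c, if_neg]; rw [hall c]; exact lt_irrefl 1
    rw [hzh1 x, hzh1 y]
  · push_neg at hcase
    have hqlt : ∀ c, qbar c < 1 := fun c => lt_of_le_of_ne (hq01 c).2 (hcase c)
    have hzhat' : ∀ c, zhat c = (z c - qbar c) / (1 - qbar c) := fun c => by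
      rw [hzhat c, if_pos (hqlt c)]
    obtain ⟨x0, _, hmax⟩ := Finset.exists_max_image Finset.univ zhat ⟨x, Finset.mem_univ x⟩
    set β := zhat x0 with hβdef
    have hd0 : ∀ c, 0 < 1 - qbar c := fun c => by linarith [hqlt c]
    have hβ0 : 0 ≤ β := by
      rw [hβdef, hzhat' x0]
      exact div_nonneg (by linarith [hzq x0]) (le_of_lt (hd0 x0))
    have hβ1 : β ≤ 1 := by
      rw [hβdef, hzhat' x0, div_le_one (hd0 x0)]
      linarith [(hz01 x0).2]
    have hzh0 : ∀ c, 0 ≤ zhat c := fun c => by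
      rw [hzhat' c]
      exact div_nonneg (by linarith [hzq c]) (le_of_lt (hd0 c))
    by_cases hβz : β = 0
    · have : ∀ c, zhat c = 0 := fun c =>
        le_antisymm (hβz ▸ hmax c (Finset.mem_univ c)) (hzh0 c)
      rw [this x, this y]
    · have hβpos : 0 < β := lt_of_le_of_ne hβ0 (Ne.symm hβz)
      set v : X → ℝ := fun c => (1-β) * qbar c + β with hv
      have hv01 : ∀ c, v c ∈ Set.Icc (0:ℝ) 1 := fun c => by
        refine ⟨?_, ?_⟩ <;> simp only [hv] <;>
          nlinarith [(hq01 c).1, (hq01 c).2, hβ0, hβ1]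
      have hvpos : ∀ c, 0 < v c := fun c => by
        have := (hq01 c).1
        simp only [hv]
        nlinarith
      have hzv : ∀ c, z c ≤ v c := by
        intro c
        have h1 : zhat c ≤ β := hmax c (Finset.mem_univ c)
        rw [hzhat' c, div_le_iff₀ (hd0 c)] at h1
        have : v c = qbar c + β * (1 - qbar c) := by simp only [hv]; ring
        linarith
      have hveq : ∀ c, zhat c = β → v c = z c := by
        intro c hc
        rw [hzhat' c, div_eq_iff (ne_of_gt (hd0 c))] at hc
        simp only [hv]
        linarith
      have hkey : ∀ a b, zhat a = β → 0 < brwM μ a b → zhat b = β := by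
        intro a b ha hm
        have hva : v a = z a := hveq a ha
        have h1 : brwGF μ z a ≤ brwGF μ v a := brw_GF_mono μ hμ0 hμ1 hz01 hv01 hzv a
        have h2 : brwGF μ v a ≤ (1-β) * brwGF μ qbar a + β := by
          rw [brwGF, brwGF]
          have hle : ∀ f : X →₀ ℕ, μ a f * ∏ y ∈ f.support, v y ^ f y ≤
              (1-β) * (μ a f * ∏ y ∈ f.support, qbar y ^ f y) + β * μ a f := by
            intro f
            have hpc := brw_prod_convex ⟨hβ0, hβ1⟩ hq01 f f.support
            calc μ a f * ∏ y ∈ f.support, v y ^ f y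
                ≤ μ a f * ((1-β) * ∏ y ∈ f.support, qbar y ^ f y + β) :=
                  mul_le_mul_of_nonneg_left hpc (hμ0 a f)
              _ = (1-β) * (μ a f * ∏ y ∈ f.support, qbar y ^ f y) + β * μ a f := by ring
          calc ∑' f : X →₀ ℕ, μ a f * ∏ y ∈ f.support, v y ^ f y
              ≤ ∑' f : X →₀ ℕ, ((1-β) * (μ a f * ∏ y ∈ f.support, qbar y ^ f y) + β * μ a f) :=
                Summable.tsum_le_tsum hle (brw_summable_term μ hμ0 hμ1 hv01 a)
                  (((brw_summable_term μ hμ0 hμ1 hq01 a).mul_left _).add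
                    ((hsummu a).mul_left _))
            _ = (1-β) * (∑' f : X →₀ ℕ, μ a f * ∏ y ∈ f.support, qbar y ^ f y) + β := by
                rw [Summable.tsum_add (((brw_summable_term μ hμ0 hμ1 hq01 a)).mul_left _)
                  ((hsummu a).mul_left _), tsum_mul_left, tsum_mul_left, hμ1 a, mul_one]
        have h3 : (1-β) * brwGF μ qbar a + β = v a := by
          rw [hqfix a]
        have hGeq : brwGF μ z a = brwGF μ v a := by
          have h4 := hGz a
          apply le_antisymm h1
          calc brwGF μ v a ≤ (1-β) * brwGF μ qbar a + β := h2
            _ = v a := h3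
            _ = z a := hva
            _ ≤ brwGF μ z a := h4
        rw [brwGF, brwGF] at hGeq
        have hterm := brw_tsum_eq_term
          (fun f => mul_le_mul_of_nonneg_left
            (Finset.prod_le_prod (fun y' _ => pow_nonneg (hz01 y').1 _)
              (fun y' _ => pow_le_pow_left₀ (hz01 y').1 (hzv y') _)) (hμ0 a f))
          (brw_summable_term μ hμ0 hμ1 hz01 a) (brw_summable_term μ hμ0 hμ1 hv01 a) hGeq
        have hm' : 0 < ∑' f : X →₀ ℕ, μ a f * (f b : ℝ) := hm
        obtain ⟨f, hf⟩ := brw_exists_pos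
          (fun f => mul_nonneg (hμ0 a f) (Nat.cast_nonneg _)) hm'
        have hμf : 0 < μ a f := by
          rcases lt_or_eq_of_le (hμ0 a f) with h | h
          · exact h
          · rw [← h] at hf; simp at hf
        have hfb : b ∈ f.support := by
          rw [Finsupp.mem_support_iff]
          intro h0
          rw [h0] at hf; simp at hf
        have hPeq : ∏ y ∈ f.support, z y ^ f y = ∏ y ∈ f.support, v y ^ f y :=
          mul_left_cancel₀ (ne_of_gt hμf) (hterm f)
        have hPvpos : 0 < ∏ y ∈ f.support, v y ^ f y :=
          Finset.prod_pos fun y' _ => pow_pos (hvpos y') _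
        have hfac : z b ^ f b = v b ^ f b := by
          by_contra hne
          have hlt : z b ^ f b < v b ^ f b :=
            lt_of_le_of_ne (pow_le_pow_left₀ (hz01 b).1 (hzv b) _) hne
          have : ∏ y ∈ f.support, z y ^ f y < ∏ y ∈ f.support, v y ^ f y := by
            refine Finset.prod_lt_prod ?_
              (fun i _ => pow_le_pow_left₀ (hz01 i).1 (hzv i) _) ⟨b, hfb, hlt⟩
            intro i hi
            by_contra hnp
            push_neg at hnp
            have h0 : z i ^ f i = 0 := le_antisymm hnp (pow_nonneg (hz01 i).1 _)
            rw [Finset.prod_eq_zero hi h0] at hPeq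
            exact absurd hPeq.symm (ne_of_gt hPvpos)
          exact absurd hPeq (ne_of_lt this)
        have hzb : z b = v b := by
          have hfbne : f b ≠ 0 := Finsupp.mem_support_iff.mp hfb
          by_contra hne
          have hlt : z b < v b := lt_of_le_of_ne (hzv b) hne
          have : z b ^ f b < v b ^ f b :=
            pow_lt_pow_left₀ hlt (hz01 b).1 hfbne
          rw [hfac] at this
          exact lt_irrefl _ this
        rw [hzhat' b, div_eq_iff (ne_of_gt (hd0 b))]
        have hvb : v b = (1-β) * qbar b + β := by simp only [hv]
        rw [hzb, hvb]
        ring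
      have hall : ∀ c, zhat c = β := by
        intro c
        have h := hirr x0 c
        induction h with
        | refl => rfl
        | tail _ h2 ih => exact hkey _ _ ih h2
      rw [hall x, hall y]
end

section
/- Theorem 3.4(1): Let (X,μ) be a BRW that is locally isomorphic via a surjective map g : X → Y to a BRW (Y,ν) with Y finite, and suppose (Y,ν) satisfies Assumption 1. Then the generating function G of (X,μ) has at most one fixed point z ∈ [0,1]^X with sup_{x∈X} z(x) < 1, namely z = q̄: that is, if G(z) = z and sup_{x∈X} z(x) < 1, then z = q̄. -/
open Filter

/-- `x ⇌ y`: `x → y` and `y → x`. -/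
def brwComm {X : Type*} (μ : X → (X →₀ ℕ) → ℝ) (x y : X) : Prop :=
  brwReach μ x y ∧ brwReach μ y x

/-- `(X,μ)` is locally isomorphic to `(Y,ν)` via the surjective map `g`:
`ν_{g(x)}(h) = μ_x(π_g⁻¹(h))`, where `π_g(f)(y) = Σ_{w ∈ g⁻¹(y)} f(w)`. -/
def brwLocIso {X Y : Type*} (μ : X → (X →₀ ℕ) → ℝ) (ν : Y → (Y →₀ ℕ) → ℝ)
    (g : X → Y) : Prop :=
  ∀ (x : X) (h : Y →₀ ℕ),
    ν (g x) h = ∑' f : {f : X →₀ ℕ // Finsupp.mapDomain g f = h}, μ x f.val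

open Classical in
/-- Assumption 1: in every irreducibility class there is a vertex where a particle
can have, inside the class, a number of children different from one wpp. -/
def brwAssumption1 {Y : Type*} (ν : Y → (Y →₀ ℕ) → ℝ) : Prop :=
  ∀ y : Y, ∃ w : Y, brwComm ν w y ∧
    (∑' f : {f : Y →₀ ℕ //
        (∑ u ∈ f.support, if brwComm ν u w then f u else 0) = 1}, ν w f.val) < 1

namespace BRWProof

variable {W : Type*}

/-- The monomial `∏ y ∈ supp f, a y ^ f y`. -/
noncomputable def pprod (a : W → ℝ) (f : W →₀ ℕ) : ℝ := ∏ y ∈ f.support, a y ^ f y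

lemma brwGF_eq (μ : W → (W →₀ ℕ) → ℝ) (a : W → ℝ) (x : W) :
    brwGF μ a x = ∑' f, μ x f * pprod a f := rfl

lemma pprod_eq_prod (a : W → ℝ) (f : W →₀ ℕ) : pprod a f = f.prod fun y n => a y ^ n := rfl

lemma pprod_nonneg {a : W → ℝ} (ha : ∀ y, 0 ≤ a y) (f : W →₀ ℕ) : 0 ≤ pprod a f :=
  Finset.prod_nonneg fun y _ => pow_nonneg (ha y) _

lemma pprod_le_one {a : W → ℝ} (ha0 : ∀ y, 0 ≤ a y) (ha1 : ∀ y, a y ≤ 1) (f : W →₀ ℕ) :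
    pprod a f ≤ 1 :=
  Finset.prod_le_one (fun y _ => pow_nonneg (ha0 y) _) fun y _ => pow_le_one₀ (ha0 y) (ha1 y)

lemma pprod_mono {a b : W → ℝ} (ha : ∀ y, 0 ≤ a y) (hab : ∀ y, a y ≤ b y) (f : W →₀ ℕ) :
    pprod a f ≤ pprod b f :=
  Finset.prod_le_prod (fun y _ => pow_nonneg (ha y) _)
    fun y _ => pow_le_pow_left₀ (ha y) (hab y) _

lemma pprod_le_single {a : W → ℝ} (ha0 : ∀ y, 0 ≤ a y) (ha1 : ∀ y, a y ≤ 1)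
    {f : W →₀ ℕ} {y : W} (hy : y ∈ f.support) : pprod a f ≤ a y := by
  classical
  have h1 : pprod a f = a y ^ f y * ∏ u ∈ f.support.erase y, a u ^ f u :=
    (Finset.mul_prod_erase _ _ hy).symm
  have h2 : (∏ u ∈ f.support.erase y, a u ^ f u) ≤ 1 :=
    Finset.prod_le_one (fun u _ => pow_nonneg (ha0 u) _) fun u _ => pow_le_one₀ (ha0 u) (ha1 u)
  have h3 : a y ^ f y ≤ a y := by
    apply pow_le_of_le_one (ha0 y) (ha1 y)
    simpa using Finsupp.mem_support_iff.mp hy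
  calc pprod a f ≤ a y ^ f y * 1 := by
        rw [h1]; exact mul_le_mul_of_nonneg_left h2 (pow_nonneg (ha0 y) _)
    _ ≤ a y := by simpa using h3

lemma summable_of_tsum_eq_one {ι : Type*} {m : ι → ℝ} (h1 : ∑' f, m f = 1) : Summable m := by
  by_contra h
  rw [tsum_eq_zero_of_not_summable h] at h1
  norm_num at h1

/-- termwise equality from tsum equality. -/
lemma tsum_eq_forcing {ι : Type*} {F G : ι → ℝ} (hF : Summable F) (hG : Summable G)
    (hle : ∀ f, F f ≤ G f) (heq : ∑' f, F f = ∑' f, G f) (f : ι) : F f = G f := by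
  have hs : Summable (fun f => G f - F f) := hG.sub hF
  have h0 : ∑' f, (G f - F f) = 0 := by rw [Summable.tsum_sub hG hF, heq]; ring
  have h2 := Summable.le_tsum hs f (fun j _ => sub_nonneg.2 (hle j))
  rw [h0] at h2
  linarith [hle f]

lemma exists_pos_of_tsum_pos {ι : Type*} {F : ι → ℝ} (h : 0 < ∑' i, F i) : ∃ i, 0 < F i := by
  by_contra hc
  push_neg at hc
  have : ∑' i, F i ≤ 0 := tsum_nonpos hc
  linarith


lemma L2 {θ x y X Y : ℝ} (hθ0 : 0 ≤ θ) (hθ1 : θ ≤ 1) (hx0 : 0 ≤ x) (hy0 : 0 ≤ y)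
    (hX0 : 0 ≤ X) (hX1 : X ≤ 1) (hY0 : 0 ≤ Y) (hY1 : Y ≤ 1)
    (hx : x ≤ X + θ * (1 - X)) (hy : y ≤ Y + θ * (1 - Y)) :
    x * y ≤ X * Y + θ * (1 - X * Y) := by
  have h1 : x * y ≤ (X + θ * (1 - X)) * (Y + θ * (1 - Y)) :=
    mul_le_mul hx hy hy0 (by nlinarith)
  have key : (X + θ*(1-X)) * (Y + θ*(1-Y))
      = X*Y + θ*(1-X*Y) - θ*(1-θ)*((1-X)*(1-Y)) := by ring
  have pos : 0 ≤ θ*(1-θ)*((1-X)*(1-Y)) :=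
    mul_nonneg (mul_nonneg hθ0 (by linarith)) (mul_nonneg (by linarith) (by linarith))
  linarith

lemma L2s {θ x y X Y : ℝ} (hθ0 : 0 < θ) (hθ1 : θ < 1) (hx0 : 0 ≤ x) (hy0 : 0 ≤ y)
    (hX0 : 0 ≤ X) (hX1 : X < 1) (hY0 : 0 ≤ Y) (hY1 : Y < 1)
    (hx : x ≤ X + θ * (1 - X)) (hy : y ≤ Y + θ * (1 - Y)) :
    x * y < X * Y + θ * (1 - X * Y) := by
  have h1 : x * y ≤ (X + θ * (1 - X)) * (Y + θ * (1 - Y)) :=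
    mul_le_mul hx hy hy0 (by nlinarith)
  have key : (X + θ*(1-X)) * (Y + θ*(1-Y))
      = X*Y + θ*(1-X*Y) - θ*(1-θ)*((1-X)*(1-Y)) := by ring
  have pos : 0 < θ*(1-θ)*((1-X)*(1-Y)) :=
    mul_pos (mul_pos hθ0 (by linarith)) (mul_pos (by linarith) (by linarith))
  linarith

lemma Lpow {θ x X : ℝ} (hθ0 : 0 ≤ θ) (hθ1 : θ ≤ 1) (hx0 : 0 ≤ x)
    (hX0 : 0 ≤ X) (hX1 : X ≤ 1) (hx : x ≤ X + θ * (1 - X)) (k : ℕ) :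
    x ^ k ≤ X ^ k + θ * (1 - X ^ k) := by
  induction k with
  | zero => simp
  | succ n ih =>
      have hXn0 : (0:ℝ) ≤ X ^ n := pow_nonneg hX0 n
      have hXn1 : X ^ n ≤ 1 := pow_le_one₀ hX0 hX1
      have := L2 hθ0 hθ1 hx0 (pow_nonneg hx0 n) hX0 hX1 hXn0 hXn1 hx ih
      calc x ^ (n+1) = x * x ^ n := by ring
        _ ≤ X * X ^ n + θ * (1 - X * X ^ n) := this
        _ = X ^ (n+1) + θ * (1 - X ^ (n+1)) := by ring

lemma Lprod {W : Type*} {θ : ℝ} (hθ0 : 0 ≤ θ) (hθ1 : θ ≤ 1) (S : Finset W) (k : W → ℕ)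
    (a b : W → ℝ) (ha0 : ∀ y ∈ S, 0 ≤ a y) (ha1 : ∀ y ∈ S, a y ≤ 1)
    (hb0 : ∀ y ∈ S, 0 ≤ b y) (hb : ∀ y ∈ S, b y ≤ a y + θ * (1 - a y)) :
    ∏ y ∈ S, b y ^ k y ≤ (∏ y ∈ S, a y ^ k y) + θ * (1 - ∏ y ∈ S, a y ^ k y) := by
  classical
  induction S using Finset.induction with
  | empty => simp
  | @insert j s hnot ih =>
      have hmem : ∀ y ∈ s, y ∈ insert j s := fun y hy => Finset.mem_insert_of_mem hy
      have ihs := ih (fun y hy => ha0 y (hmem y hy)) (fun y hy => ha1 y (hmem y hy))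
        (fun y hy => hb0 y (hmem y hy)) (fun y hy => hb y (hmem y hy))
      have hj : j ∈ insert j s := Finset.mem_insert_self j s
      have hA0 : (0:ℝ) ≤ ∏ y ∈ s, a y ^ k y :=
        Finset.prod_nonneg fun y hy => pow_nonneg (ha0 y (hmem y hy)) _
      have hA1 : (∏ y ∈ s, a y ^ k y) ≤ 1 :=
        Finset.prod_le_one (fun y hy => pow_nonneg (ha0 y (hmem y hy)) _)
          (fun y hy => pow_le_one₀ (ha0 y (hmem y hy)) (ha1 y (hmem y hy)))
      have hB0 : (0:ℝ) ≤ ∏ y ∈ s, b y ^ k y :=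
        Finset.prod_nonneg fun y hy => pow_nonneg (hb0 y (hmem y hy)) _
      have hx := Lpow hθ0 hθ1 (hb0 j hj) (ha0 j hj) (ha1 j hj) (hb j hj) (k j)
      have := L2 hθ0 hθ1 (pow_nonneg (hb0 j hj) _) hB0
        (pow_nonneg (ha0 j hj) _) (pow_le_one₀ (ha0 j hj) (ha1 j hj)) hA0 hA1 hx ihs
      rw [Finset.prod_insert hnot, Finset.prod_insert hnot]
      exact this

/-- Strict version: if the total degree over coordinates where `a < 1` is at least 2. -/
lemma Lprod_strict {W : Type*} {θ : ℝ} (hθ0 : 0 < θ) (hθ1 : θ < 1) (S : Finset W) (k : W → ℕ)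
    (a : W → ℝ) (ha0 : ∀ y ∈ S, 0 ≤ a y) (ha1 : ∀ y ∈ S, a y ≤ 1)
    (hd : 2 ≤ ∑ y ∈ S.filter (fun y => a y < 1), k y) :
    ∏ y ∈ S, (a y + θ * (1 - a y)) ^ k y
      < (∏ y ∈ S, a y ^ k y) + θ * (1 - ∏ y ∈ S, a y ^ k y) := by
  classical
  set b : W → ℝ := fun y => a y + θ * (1 - a y) with hbdef
  have hb0 : ∀ y ∈ S, 0 ≤ b y := fun y hy => by
    have := ha0 y hy; have := ha1 y hy; simp only [hbdef]; nlinarith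
  have hb : ∀ y ∈ S, b y ≤ a y + θ * (1 - a y) := fun y _ => le_refl _
  -- find y₁ in the filtered set with k y₁ ≥ 1
  have hne : ∃ y₁ ∈ S.filter (fun y => a y < 1), 1 ≤ k y₁ := by
    by_contra hc
    push_neg at hc
    have hz : ∑ y ∈ S.filter (fun y => a y < 1), k y = 0 :=
      Finset.sum_eq_zero (fun y hy => by have := hc y hy; omega)
    omega
  obtain ⟨y₁, hy₁f, hk₁⟩ := hne
  have hy₁S : y₁ ∈ S := (Finset.mem_filter.mp hy₁f).1
  have hay₁ : a y₁ < 1 := (Finset.mem_filter.mp hy₁f).2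
  -- the second factor bound
  set k' : W → ℕ := fun y => if y = y₁ then k y₁ - 1 else k y with hk'def
  set U₂ : ℝ := a y₁ ^ (k y₁ - 1) * ∏ y ∈ S.erase y₁, a y ^ k y with hU₂def
  have hrest0 : (0:ℝ) ≤ ∏ y ∈ S.erase y₁, a y ^ k y :=
    Finset.prod_nonneg fun y hy => pow_nonneg (ha0 y (Finset.mem_of_mem_erase hy)) _
  have hrest1 : (∏ y ∈ S.erase y₁, a y ^ k y) ≤ 1 :=
    Finset.prod_le_one (fun y hy => pow_nonneg (ha0 y (Finset.mem_of_mem_erase hy)) _)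
      (fun y hy => pow_le_one₀ (ha0 y (Finset.mem_of_mem_erase hy)) (ha1 y (Finset.mem_of_mem_erase hy)))
  have hU₂0 : 0 ≤ U₂ := mul_nonneg (pow_nonneg (ha0 y₁ hy₁S) _) hrest0
  have hU₂1 : U₂ < 1 := by
    rcases Nat.lt_or_ge (k y₁) 2 with h2 | h2
    · -- k y₁ = 1 : find second witness
      have hk1 : k y₁ = 1 := by omega
      have hne2 : ∃ y₂ ∈ (S.filter (fun y => a y < 1)).erase y₁, 1 ≤ k y₂ := by
        by_contra hc
        push_neg at hc
        have hz : ∑ y ∈ (S.filter (fun y => a y < 1)).erase y₁, k y = 0 :=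
          Finset.sum_eq_zero (fun y hy => by have := hc y hy; omega)
        have := Finset.add_sum_erase _ k hy₁f
        omega
      obtain ⟨y₂, hy₂f, hk₂⟩ := hne2
      have hy₂e : y₂ ∈ S.erase y₁ := by
        rcases Finset.mem_erase.mp hy₂f with ⟨hne, hf⟩
        exact Finset.mem_erase.mpr ⟨hne, (Finset.mem_filter.mp hf).1⟩
      have hay₂ : a y₂ < 1 := (Finset.mem_filter.mp (Finset.mem_erase.mp hy₂f).2).2
      have h1 : (∏ y ∈ S.erase y₁, a y ^ k y) ≤ a y₂ ^ k y₂ := by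
        have := Finset.mul_prod_erase (S.erase y₁) (fun y => a y ^ k y) hy₂e
        have hr1 : (∏ y ∈ (S.erase y₁).erase y₂, a y ^ k y) ≤ 1 :=
          Finset.prod_le_one
            (fun y hy => pow_nonneg (ha0 y (Finset.mem_of_mem_erase (Finset.mem_of_mem_erase hy))) _)
            (fun y hy => pow_le_one₀ (ha0 y (Finset.mem_of_mem_erase (Finset.mem_of_mem_erase hy)))
              (ha1 y (Finset.mem_of_mem_erase (Finset.mem_of_mem_erase hy))))
        calc (∏ y ∈ S.erase y₁, a y ^ k y)
            = a y₂ ^ k y₂ * ∏ y ∈ (S.erase y₁).erase y₂, a y ^ k y := this.symm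
          _ ≤ a y₂ ^ k y₂ * 1 := by
              exact mul_le_mul_of_nonneg_left hr1 (pow_nonneg (ha0 y₂ (Finset.mem_of_mem_erase hy₂e)) _)
          _ = a y₂ ^ k y₂ := mul_one _
      have h2 : a y₂ ^ k y₂ < 1 :=
        pow_lt_one₀ (ha0 y₂ (Finset.mem_of_mem_erase hy₂e)) hay₂ (by omega)
      calc U₂ = 1 * ∏ y ∈ S.erase y₁, a y ^ k y := by rw [hU₂def, hk1]; ring_nf
        _ = ∏ y ∈ S.erase y₁, a y ^ k y := one_mul _
        _ ≤ a y₂ ^ k y₂ := h1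
        _ < 1 := h2
    · -- k y₁ ≥ 2
      have h1 : a y₁ ^ (k y₁ - 1) < 1 := pow_lt_one₀ (ha0 y₁ hy₁S) hay₁ (by omega)
      calc U₂ ≤ a y₁ ^ (k y₁ - 1) * 1 :=
            mul_le_mul_of_nonneg_left hrest1 (pow_nonneg (ha0 y₁ hy₁S) _)
        _ = a y₁ ^ (k y₁ - 1) := mul_one _
        _ < 1 := h1
  -- bound the second b-factor by U₂ + θ(1-U₂) using Lprod with k'
  have hb0' : ∀ y ∈ S, 0 ≤ b y := hb0
  have hsecond : b y₁ ^ (k y₁ - 1) * ∏ y ∈ S.erase y₁, b y ^ k y ≤ U₂ + θ * (1 - U₂) := by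
    have h := Lprod (le_of_lt hθ0) (le_of_lt hθ1) S k' a b ha0 ha1 hb0 hb
    have hPb : ∏ y ∈ S, b y ^ k' y = b y₁ ^ (k y₁ - 1) * ∏ y ∈ S.erase y₁, b y ^ k y := by
      rw [← Finset.mul_prod_erase S (fun y => b y ^ k' y) hy₁S]
      congr 1
      · simp [hk'def]
      · apply Finset.prod_congr rfl
        intro y hy
        have : y ≠ y₁ := (Finset.mem_erase.mp hy).1
        simp [hk'def, this]
    have hPa : ∏ y ∈ S, a y ^ k' y = U₂ := by
      rw [← Finset.mul_prod_erase S (fun y => a y ^ k' y) hy₁S, hU₂def]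
      congr 1
      · simp [hk'def]
      · apply Finset.prod_congr rfl
        intro y hy
        have : y ≠ y₁ := (Finset.mem_erase.mp hy).1
        simp [hk'def, this]
    rw [hPb, hPa] at h
    exact h
  -- assemble
  have hsplit : ∏ y ∈ S, b y ^ k y = b y₁ * (b y₁ ^ (k y₁ - 1) * ∏ y ∈ S.erase y₁, b y ^ k y) := by
    rw [← Finset.mul_prod_erase S (fun y => b y ^ k y) hy₁S, ← mul_assoc]
    congr 1
    rw [← pow_succ']
    congr 1
    omega
  have hsplita : ∏ y ∈ S, a y ^ k y = a y₁ * U₂ := by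
    rw [← Finset.mul_prod_erase S (fun y => a y ^ k y) hy₁S, hU₂def, ← mul_assoc]
    congr 1
    rw [← pow_succ']
    congr 1
    omega
  have hx : b y₁ ≤ a y₁ + θ * (1 - a y₁) := le_refl _
  have hsecond0 : 0 ≤ b y₁ ^ (k y₁ - 1) * ∏ y ∈ S.erase y₁, b y ^ k y := by
    apply mul_nonneg (pow_nonneg (hb0 y₁ hy₁S) _)
    exact Finset.prod_nonneg fun y hy => pow_nonneg (hb0 y (Finset.mem_of_mem_erase hy)) _
  have := L2s hθ0 hθ1 (hb0 y₁ hy₁S) hsecond0 (ha0 y₁ hy₁S) hay₁ hU₂0 hU₂1 hx hsecond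
  rw [hsplit, hsplita]
  exact this


section GF
variable (μ : W → (W →₀ ℕ) → ℝ) (h0 : ∀ x f, 0 ≤ μ x f) (h1 : ∀ x, ∑' f, μ x f = 1)
include h0 h1

omit h0 in
lemma summable_mu (x : W) : Summable (μ x) := summable_of_tsum_eq_one (h1 x)

lemma summable_term {a : W → ℝ} (ha0 : ∀ y, 0 ≤ a y) (ha1 : ∀ y, a y ≤ 1) (x : W) :
    Summable (fun f => μ x f * pprod a f) :=
  Summable.of_nonneg_of_le (fun f => mul_nonneg (h0 x f) (pprod_nonneg ha0 f))
    (fun f => mul_le_of_le_one_right (h0 x f) (pprod_le_one ha0 ha1 f)) (summable_mu μ h1 x)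

omit h1 in
lemma GF_nonneg {a : W → ℝ} (ha0 : ∀ y, 0 ≤ a y) (x : W) : 0 ≤ brwGF μ a x := by
  rw [brwGF_eq]
  exact tsum_nonneg fun f => mul_nonneg (h0 x f) (pprod_nonneg ha0 f)

lemma GF_le_one {a : W → ℝ} (ha0 : ∀ y, 0 ≤ a y) (ha1 : ∀ y, a y ≤ 1) (x : W) :
    brwGF μ a x ≤ 1 := by
  rw [brwGF_eq]
  calc ∑' f, μ x f * pprod a f ≤ ∑' f, μ x f :=
        Summable.tsum_le_tsum (fun f => mul_le_of_le_one_right (h0 x f) (pprod_le_one ha0 ha1 f))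
          (summable_term μ h0 h1 ha0 ha1 x) (summable_mu μ h1 x)
    _ = 1 := h1 x

lemma GF_mono {a b : W → ℝ} (ha0 : ∀ y, 0 ≤ a y) (hab : ∀ y, a y ≤ b y) (hb1 : ∀ y, b y ≤ 1)
    (x : W) : brwGF μ a x ≤ brwGF μ b x := by
  have ha1 : ∀ y, a y ≤ 1 := fun y => le_trans (hab y) (hb1 y)
  have hb0 : ∀ y, 0 ≤ b y := fun y => le_trans (ha0 y) (hab y)
  rw [brwGF_eq, brwGF_eq]
  exact Summable.tsum_le_tsum
    (fun f => mul_le_mul_of_nonneg_left (pprod_mono ha0 hab f) (h0 x f))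
    (summable_term μ h0 h1 ha0 ha1 x) (summable_term μ h0 h1 hb0 hb1 x)

/-- the affine combination identity. -/
lemma GF_affine {a : W → ℝ} (ha0 : ∀ y, 0 ≤ a y) (ha1 : ∀ y, a y ≤ 1) {θ : ℝ}
    (hθ0 : 0 ≤ θ) (hθ1 : θ ≤ 1) (x : W) :
    ∑' f, μ x f * (pprod a f + θ * (1 - pprod a f))
      = brwGF μ a x + θ * (1 - brwGF μ a x) := by
  have hsum : Summable (fun f => μ x f * pprod a f) := summable_term μ h0 h1 ha0 ha1 x
  calc ∑' f, μ x f * (pprod a f + θ * (1 - pprod a f))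
      = ∑' f, ((1 - θ) * (μ x f * pprod a f) + θ * μ x f) := by
        apply tsum_congr; intro f; ring
    _ = (1 - θ) * (∑' f, μ x f * pprod a f) + θ * ∑' f, μ x f := by
        rw [Summable.tsum_add (hsum.mul_left _) ((summable_mu μ h1 x).mul_left _),
          tsum_mul_left, tsum_mul_left]
    _ = brwGF μ a x + θ * (1 - brwGF μ a x) := by rw [h1 x, ← brwGF_eq]; ring

omit μ h0 h1 in
lemma pprod_conv {a : W → ℝ} (ha0 : ∀ y, 0 ≤ a y) (ha1 : ∀ y, a y ≤ 1) {θ : ℝ}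
    (hθ0 : 0 ≤ θ) (hθ1 : θ ≤ 1) (f : W →₀ ℕ) :
    pprod (fun y => a y + θ * (1 - a y)) f ≤ pprod a f + θ * (1 - pprod a f) :=
  Lprod hθ0 hθ1 f.support f a _ (fun y _ => ha0 y) (fun y _ => ha1 y)
    (fun y _ => by have := ha0 y; have := ha1 y; nlinarith)
    (fun y _ => le_refl _)

lemma GF_convex {a : W → ℝ} (ha0 : ∀ y, 0 ≤ a y) (ha1 : ∀ y, a y ≤ 1) {θ : ℝ}
    (hθ0 : 0 ≤ θ) (hθ1 : θ ≤ 1) (x : W) :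
    brwGF μ (fun y => a y + θ * (1 - a y)) x ≤ brwGF μ a x + θ * (1 - brwGF μ a x) := by
  rw [← GF_affine μ h0 h1 ha0 ha1 hθ0 hθ1 x, brwGF_eq]
  have hb0 : ∀ y, 0 ≤ a y + θ * (1 - a y) := fun y => by
    have := ha0 y; have := ha1 y; nlinarith
  have hb1 : ∀ y, a y + θ * (1 - a y) ≤ 1 := fun y => by
    have := ha0 y; have := ha1 y; nlinarith
  apply Summable.tsum_le_tsum
  · intro f
    exact mul_le_mul_of_nonneg_left (pprod_conv ha0 ha1 hθ0 hθ1 f) (h0 x f)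
  · exact summable_term μ h0 h1 hb0 hb1 x
  · apply Summable.of_nonneg_of_le
      (fun f => mul_nonneg (h0 x f)
        (by have h := pprod_le_one ha0 ha1 f; have := pprod_nonneg ha0 f; nlinarith))
      (fun f => mul_le_of_le_one_right (h0 x f)
        (by have h := pprod_le_one ha0 ha1 f; have := pprod_nonneg ha0 f; nlinarith))
      (summable_mu μ h1 x)

omit h1 in
/-- positive moment matrix entry gives a positive-probability offspring containing `y'`. -/
lemma exists_child (x y' : W) (hm : 0 < brwM μ x y') :
    ∃ f, 0 < μ x f ∧ 1 ≤ f y' := by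
  obtain ⟨f, hf⟩ := exists_pos_of_tsum_pos
    (show 0 < ∑' f, μ x f * (f y' : ℝ) from hm)
  refine ⟨f, ?_, ?_⟩
  · rcases lt_or_eq_of_le (h0 x f) with h | h
    · exact h
    · exfalso; rw [← h] at hf; simp at hf
  · by_contra hc
    have : f y' = 0 := by omega
    rw [this] at hf; simp at hf

/-- propagation of the value 1 at a fixed point along positive matrix entries. -/
lemma fix_one_propagate {t : W → ℝ} (ht0 : ∀ y, 0 ≤ t y) (ht1 : ∀ y, t y ≤ 1)
    (hfix : ∀ y, brwGF μ t y = t y) {y y' : W} (hy : t y = 1) (hm : 0 < brwM μ y y') :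
    t y' = 1 := by
  have hterm : ∀ f, μ y f * pprod t f = μ y f := by
    apply tsum_eq_forcing (summable_term μ h0 h1 ht0 ht1 y) (summable_mu μ h1 y)
      (fun f => mul_le_of_le_one_right (h0 y f) (pprod_le_one ht0 ht1 f))
    rw [← brwGF_eq, hfix y, hy, h1 y]
  obtain ⟨f, hf, hfy⟩ := exists_child μ h0 y y' hm
  have h2 : pprod t f = 1 :=
    mul_left_cancel₀ (ne_of_gt hf) (by rw [mul_one, hterm f])
  have hsupp : y' ∈ f.support := Finsupp.mem_support_iff.mpr (by omega)
  have := pprod_le_single ht0 ht1 hsupp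
  have := ht1 y'
  linarith [h2 ▸ pprod_le_single ht0 ht1 hsupp]

end GF

/-- closure of a predicate along reachability. -/
lemma reach_closed {ν : W → (W →₀ ℕ) → ℝ} {P : W → Prop}
    (h : ∀ a b, P a → 0 < brwM ν a b → P b) {a b : W} (hr : brwReach ν a b) (ha : P a) : P b := by
  induction hr with
  | refl => exact ha
  | tail _ hstep ih => exact h _ _ ih hstep

/-- no infinite strict descent in a finite type. -/
lemma no_descent {Y : Type*} [Finite Y] (ν : Y → (Y →₀ ℕ) → ℝ) (F : Set Y)
    (h : ∀ y ∈ F, ∃ y', y' ∈ F ∧ brwReach ν y y' ∧ ¬ brwReach ν y' y)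
    (y₀ : Y) (hy₀ : y₀ ∈ F) : False := by
  have step : ∀ p : {y // y ∈ F}, ∃ q : {y // y ∈ F},
      brwReach ν p.1 q.1 ∧ ¬ brwReach ν q.1 p.1 := by
    rintro ⟨y, hy⟩
    obtain ⟨y', h1, h2, h3⟩ := h y hy
    exact ⟨⟨y', h1⟩, h2, h3⟩
  choose nxt h2 h3 using step
  set seq : ℕ → {y // y ∈ F} := fun n => nxt^[n] ⟨y₀, hy₀⟩ with hseq
  have hsucc : ∀ n, seq (n + 1) = nxt (seq n) := fun n => Function.iterate_succ_apply' nxt n _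
  have hchain : ∀ n m, n ≤ m → brwReach ν (seq n).1 (seq m).1 := by
    intro n m hnm
    induction m with
    | zero =>
        have : n = 0 := by omega
        subst this; exact Relation.ReflTransGen.refl
    | succ m ih =>
        rcases Nat.lt_or_ge n (m+1) with hlt | hge
        · have := ih (by omega)
          rw [hsucc m]
          exact this.trans (h2 (seq m))
        · have : n = m + 1 := by omega
          subst this; exact Relation.ReflTransGen.refl
  have key : ∀ i j, i < j → seq i ≠ seq j := by
    intro i j hlt hij
    have hr : brwReach ν (seq (i+1)).1 (seq j).1 := hchain _ _ (by omega)
    rw [← hij] at hr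
    rw [hsucc i] at hr
    exact h3 (seq i) hr
  obtain ⟨i, j, hne, heq⟩ := Finite.exists_ne_map_eq_of_infinite seq
  rcases Nat.lt_or_ge i j with hlt | hge
  · exact key i j hlt heq
  · exact key j i (by omega) heq.symm


/-- The core uniqueness argument: if `t,s` are fixed points in `[0,1]` with `t ≤ s`,
and `s < 1` wherever `t < 1`, then `s ≤ t`. -/
lemma main_le {Y : Type*} [Fintype Y] (ν : Y → (Y →₀ ℕ) → ℝ)
    (hν0 : ∀ y f, 0 ≤ ν y f) (hν1 : ∀ y, ∑' f, ν y f = 1)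
    (hass : brwAssumption1 ν)
    (t s : Y → ℝ) (ht0 : ∀ y, 0 ≤ t y) (ht1 : ∀ y, t y ≤ 1)
    (hs0 : ∀ y, 0 ≤ s y) (hs1 : ∀ y, s y ≤ 1)
    (hts : ∀ y, t y ≤ s y) (hBlt : ∀ y, t y < 1 → s y < 1)
    (htfix : ∀ y, brwGF ν t y = t y) (hsfix : ∀ y, brwGF ν s y = s y) :
    ∀ y, s y ≤ t y := by
  classical
  by_cases hBne : ∃ y, t y < 1
  case neg =>
    push_neg at hBne
    intro y
    have : t y = 1 := le_antisymm (ht1 y) (hBne y)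
    rw [this]; exact hs1 y
  obtain ⟨yb, hyb⟩ := hBne
  set Bf : Finset Y := Finset.univ.filter (fun y => t y < 1) with hBf
  have hBfne : Bf.Nonempty := ⟨yb, by simp [hBf, hyb]⟩
  obtain ⟨y₀, hy₀B, hy₀min⟩ := Finset.exists_min_image Bf (fun y => (1 - s y) / (1 - t y)) hBfne
  set r : ℝ := (1 - s y₀) / (1 - t y₀) with hrdef
  have hy₀B' : t y₀ < 1 := by
    have := Finset.mem_filter.mp hy₀B; exact this.2
  have hrpos : 0 < r := div_pos (by linarith [hBlt y₀ hy₀B']) (by linarith)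
  by_cases hr1 : 1 ≤ r
  case pos =>
    intro y
    by_cases hy : t y < 1
    · have hmin : r ≤ (1 - s y) / (1 - t y) := hy₀min y (by simp [hBf, hy])
      have h3 : 1 ≤ (1 - s y) / (1 - t y) := le_trans hr1 hmin
      have h4 : 1 * (1 - t y) ≤ ((1 - s y) / (1 - t y)) * (1 - t y) :=
        mul_le_mul_of_nonneg_right h3 (by linarith)
      rw [div_mul_cancel₀ _ (by linarith : (1:ℝ) - t y ≠ 0)] at h4
      linarith
    · push_neg at hy
      have : t y = 1 := le_antisymm (ht1 y) hy
      rw [this]; exact hs1 y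
  -- hard case: r < 1, derive a contradiction
  exfalso
  push_neg at hr1
  set θ : ℝ := 1 - r with hθdef
  have hθ0 : 0 < θ := by rw [hθdef]; linarith
  have hθ1 : θ < 1 := by rw [hθdef]; linarith
  set w : Y → ℝ := fun y => t y + θ * (1 - t y) with hwdef
  have hw0 : ∀ y, 0 ≤ w y := fun y => by
    have := ht0 y; have := ht1 y; simp only [hwdef]; nlinarith
  have hw1 : ∀ y, w y ≤ 1 := fun y => by
    have := ht0 y; have := ht1 y; simp only [hwdef]; nlinarith
  have hwtop : ∀ y, t y = 1 → w y = 1 := fun y hy => by simp [hwdef, hy]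
  have hsw : ∀ y, s y ≤ w y := by
    intro y
    by_cases hy : t y < 1
    · have hmin : r ≤ (1 - s y) / (1 - t y) := hy₀min y (by simp [hBf, hy])
      have hmul : r * (1 - t y) ≤ 1 - s y := (le_div_iff₀ (by linarith)).mp hmin
      have hexp : w y = 1 - r * (1 - t y) := by simp only [hwdef, hθdef]; ring
      linarith
    · push_neg at hy
      have h1 : t y = 1 := le_antisymm (ht1 y) hy
      rw [hwtop y h1]; exact hs1 y
  set E : Set Y := {y | t y < 1 ∧ s y = w y} with hEdef
  have hy₀E : y₀ ∈ E := by
    constructor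
    · exact hy₀B'
    · have : r * (1 - t y₀) = 1 - s y₀ := div_mul_cancel₀ _ (by linarith : (1:ℝ) - t y₀ ≠ 0)
      have hexp : w y₀ = 1 - r * (1 - t y₀) := by simp only [hwdef, hθdef]; ring
      linarith
  -- the two termwise equalities at points of E
  have Estep : ∀ y ∈ E, ∀ f, 0 < ν y f →
      pprod s f = pprod w f ∧ pprod w f = pprod t f + θ * (1 - pprod t f) := by
    intro y hyE f hf
    obtain ⟨hyB, hysw⟩ := hyE
    have h1 : s y ≤ brwGF ν w y := by
      rw [← hsfix y]; exact GF_mono ν hν0 hν1 hs0 hsw hw1 y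
    have h2 : brwGF ν w y ≤ w y := by
      have hc := GF_convex ν hν0 hν1 ht0 ht1 (le_of_lt hθ0) (le_of_lt hθ1) y
      have : brwGF ν w y = brwGF ν (fun u => t u + θ * (1 - t u)) y := rfl
      rw [this]
      calc brwGF ν (fun u => t u + θ * (1 - t u)) y
          ≤ brwGF ν t y + θ * (1 - brwGF ν t y) := hc
        _ = t y + θ * (1 - t y) := by rw [htfix y]
        _ = w y := rfl
    have hGFw : brwGF ν w y = w y := le_antisymm h2 (by rw [← hysw] at *; exact h1)
    have hGFs : brwGF ν s y = brwGF ν w y := by rw [hsfix y, hGFw, hysw]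
    constructor
    · -- termwise from hGFs
      have key := tsum_eq_forcing (summable_term ν hν0 hν1 hs0 hs1 y)
        (summable_term ν hν0 hν1 hw0 hw1 y)
        (fun f => mul_le_mul_of_nonneg_left (pprod_mono hs0 hsw f) (hν0 y f))
        (by rw [← brwGF_eq, ← brwGF_eq]; exact hGFs) f
      exact mul_left_cancel₀ (ne_of_gt hf) key
    · -- termwise from hGFw and affine identity
      have hsumG : Summable (fun f => ν y f * (pprod t f + θ * (1 - pprod t f))) := by
        apply Summable.of_nonneg_of_le _ _ (summable_mu ν hν1 y)
        · intro f
          have := pprod_nonneg ht0 f; have := pprod_le_one ht0 ht1 f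
          apply mul_nonneg (hν0 y f); nlinarith
        · intro f
          have := pprod_nonneg ht0 f; have := pprod_le_one ht0 ht1 f
          apply mul_le_of_le_one_right (hν0 y f); nlinarith
      have key := tsum_eq_forcing (summable_term ν hν0 hν1 hw0 hw1 y) hsumG
        (fun f => mul_le_mul_of_nonneg_left
          (by
            have := pprod_conv ht0 ht1 (le_of_lt hθ0) (le_of_lt hθ1) f
            exact le_trans (le_of_eq rfl) this) (hν0 y f))
        (by
          rw [← brwGF_eq, GF_affine ν hν0 hν1 ht0 ht1 (le_of_lt hθ0) (le_of_lt hθ1) y,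
            htfix y, hGFw]) f
      exact mul_left_cancel₀ (ne_of_gt hf) key
  -- structural consequence
  have Echild : ∀ y ∈ E, ∀ f, 0 < ν y f →
      (f.support.filter (fun u => t u < 1) = ∅ ∧ pprod s f = 1) ∨
      (∃ y', f.support.filter (fun u => t u < 1) = {y'} ∧ f y' = 1 ∧ y' ∈ E ∧
        pprod s f = s y') := by
    intro y hyE f hf
    obtain ⟨heqsw, heqconv⟩ := Estep y hyE f hf
    set T : Finset Y := f.support.filter (fun u => t u < 1) with hTdef
    have hsone : ∀ u ∈ f.support, u ∉ T → s u = 1 ∧ w u = 1 ∧ t u = 1 := by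
      intro u hu hnu
      have : ¬ t u < 1 := fun hlt => hnu (Finset.mem_filter.mpr ⟨hu, hlt⟩)
      have htu : t u = 1 := le_antisymm (ht1 u) (not_lt.mp this)
      exact ⟨le_antisymm (hs1 u) (htu ▸ hts u), hwtop u htu, htu⟩
    have hdeg : (∑ u ∈ T, f u) ≤ 1 := by
      by_contra hc
      push_neg at hc
      have hc2 : 2 ≤ ∑ u ∈ f.support.filter (fun u => t u < 1), f u := by
        rw [hTdef] at hc; omega
      have hstrict := Lprod_strict hθ0 hθ1 f.support f t
        (fun u _ => ht0 u) (fun u _ => ht1 u) hc2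
      have : pprod w f = ∏ u ∈ f.support, (t u + θ * (1 - t u)) ^ f u := rfl
      rw [heqconv] at this
      have hpt : pprod t f = ∏ u ∈ f.support, t u ^ f u := rfl
      rw [hpt] at this
      linarith [hstrict, this.symm.le, this.ge]
    by_cases hTe : T = ∅
    · left
      refine ⟨hTe, ?_⟩
      have : pprod s f = ∏ u ∈ f.support, s u ^ f u := rfl
      rw [this]
      apply Finset.prod_eq_one
      intro u hu
      have := hsone u hu (by rw [hTe]; exact Finset.notMem_empty u)
      rw [this.1, one_pow]
    · right
      obtain ⟨y', hy'T⟩ := Finset.nonempty_of_ne_empty hTe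
      have hcard : T.card ≤ 1 := by
        have h1 : T.card = ∑ _u ∈ T, 1 := by simp
        have h2 : (∑ _u ∈ T, 1) ≤ ∑ u ∈ T, f u := by
          apply Finset.sum_le_sum
          intro u hu
          have := Finset.mem_filter.mp hu
          have := Finsupp.mem_support_iff.mp this.1
          omega
        omega
      have hsingle : T = {y'} := by
        apply Finset.eq_singleton_iff_unique_mem.mpr
        refine ⟨hy'T, ?_⟩
        intro u hu
        by_contra hne
        have : 2 ≤ T.card := Finset.one_lt_card.mpr ⟨u, hu, y', hy'T, hne⟩
        omega
      have hfy' : f y' = 1 := by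
        have h1 : (∑ u ∈ T, f u) = f y' := by rw [hsingle]; simp
        have h2 : 1 ≤ f y' := by
          have := Finset.mem_filter.mp hy'T
          have := Finsupp.mem_support_iff.mp this.1
          omega
        omega
      have hy'supp : y' ∈ f.support := (Finset.mem_filter.mp hy'T).1
      -- split products
      have hprodgen : ∀ (a : Y → ℝ), (∀ u ∈ f.support, u ∉ T → a u = 1) →
          pprod a f = a y' := by
        intro a hone
        have : pprod a f = (∏ u ∈ T, a u ^ f u) *
            ∏ u ∈ f.support.filter (fun u => ¬ t u < 1), a u ^ f u := by
          rw [show pprod a f = ∏ u ∈ f.support, a u ^ f u from rfl,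
            ← Finset.prod_filter_mul_prod_filter_not f.support (fun u => t u < 1)]
        rw [this]
        have h2 : (∏ u ∈ f.support.filter (fun u => ¬ t u < 1), a u ^ f u) = 1 := by
          apply Finset.prod_eq_one
          intro u hu
          obtain ⟨hu1, hu2⟩ := Finset.mem_filter.mp hu
          rw [hone u hu1 (fun hT => hu2 (Finset.mem_filter.mp hT).2), one_pow]
        rw [h2, mul_one, hsingle]
        simp [hfy']
      have hps : pprod s f = s y' := hprodgen s (fun u hu hnu => (hsone u hu hnu).1)
      have hpw : pprod w f = w y' := hprodgen w (fun u hu hnu => (hsone u hu hnu).2.1)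
      have hy'E : y' ∈ E := by
        constructor
        · exact (Finset.mem_filter.mp hy'T).2
        · rw [← hps, ← hpw]; exact heqsw
      exact ⟨y', hsingle, hfy', hy'E, hps⟩
  -- the maximizer of u over E
  set uf : Y → ℝ := fun y => 1 - s y with hufdef
  set Ef : Finset Y := Finset.univ.filter (fun y => y ∈ E) with hEfdef
  have hEfne : Ef.Nonempty := ⟨y₀, by simp [hEfdef]; exact hy₀E⟩
  obtain ⟨ys, hysEf, hysmax⟩ := Finset.exists_max_image Ef uf hEfne
  have hysE : ys ∈ E := by have := Finset.mem_filter.mp hysEf; exact this.2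
  set um : ℝ := uf ys with humdef
  have hum0 : 0 < um := by
    have h1 : t ys < 1 := hysE.1
    have := hBlt ys h1
    simp only [humdef, hufdef]; linarith
  set F : Set Y := {y | y ∈ E ∧ uf y = um} with hFdef
  have hysF : ys ∈ F := ⟨hysE, rfl⟩
  -- F-structure of offspring
  have Fstep : ∀ y ∈ F, ∀ f, 0 < ν y f →
      ∃ y', f.support.filter (fun u => t u < 1) = {y'} ∧ f y' = 1 ∧ y' ∈ F := by
    intro y hyF f hf
    obtain ⟨hyE, hyum⟩ := hyF
    -- the u-identity
    have hid : ∑' f, ν y f * (1 - pprod s f) = um := by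
      have h1 : ∑' f, ν y f * (1 - pprod s f)
          = ∑' f, (ν y f - ν y f * pprod s f) := by
        apply tsum_congr; intro f; ring
      rw [h1, Summable.tsum_sub (summable_mu ν hν1 y) (summable_term ν hν0 hν1 hs0 hs1 y),
        hν1 y, ← brwGF_eq, hsfix y]
      simp only [← hyum, hufdef]
    have hRHS : ∑' f, ν y f * um = um := by rw [tsum_mul_right, hν1 y, one_mul]
    have hle : ∀ f, ν y f * (1 - pprod s f) ≤ ν y f * um := by
      intro f
      by_cases hν : 0 < ν y f
      · rcases Echild y hyE f hν with ⟨_, hp1⟩ | ⟨y', _, _, hy'E, hps⟩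
        · rw [hp1]; simp; exact mul_nonneg (le_of_lt hν) (le_of_lt hum0)
        · rw [hps]
          apply mul_le_mul_of_nonneg_left _ (hν0 y f)
          have := hysmax y' (by simp [hEfdef]; exact hy'E)
          simp only [hufdef] at this ⊢
          exact this
      · have : ν y f = 0 := le_antisymm (not_lt.mp hν) (hν0 y f)
        rw [this]; simp
    have hsumL : Summable (fun f => ν y f * (1 - pprod s f)) := by
      apply Summable.of_nonneg_of_le _ _ (summable_mu ν hν1 y)
      · intro f
        have := pprod_le_one hs0 hs1 f
        apply mul_nonneg (hν0 y f); linarith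
      · intro f
        have := pprod_nonneg hs0 f
        apply mul_le_of_le_one_right (hν0 y f); linarith
    have hsumR : Summable (fun f => ν y f * um) := (summable_mu ν hν1 y).mul_right um
    have hforce := tsum_eq_forcing hsumL hsumR hle (by rw [hid, hRHS]) f
    have heq : 1 - pprod s f = um := mul_left_cancel₀ (ne_of_gt hf) hforce
    rcases Echild y hyE f hf with ⟨_, hp1⟩ | ⟨y', hT, hf1, hy'E, hps⟩
    · exfalso; rw [hp1] at heq; simp at heq; linarith
    · refine ⟨y', hT, hf1, hy'E, ?_⟩
      simp only [hufdef]
      rw [← heq, hps]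
  -- closure of F along positive matrix entries into B
  have CL : ∀ y, y ∈ F → ∀ y', 0 < brwM ν y y' → t y' < 1 → y' ∈ F := by
    intro y hyF y' hm hty'
    obtain ⟨f, hf, hfy'⟩ := exists_child ν hν0 y y' hm
    obtain ⟨c, hT, hfc, hcF⟩ := Fstep y hyF f hf
    have : y' ∈ f.support.filter (fun u => t u < 1) :=
      Finset.mem_filter.mpr ⟨Finsupp.mem_support_iff.mpr (by omega), hty'⟩
    rw [hT] at this
    have : y' = c := Finset.mem_singleton.mp this
    rw [this]; exact hcF
  -- propagation of t = 1
  have Aclo : ∀ a b, t a = 1 → brwReach ν a b → t b = 1 := by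
    intro a b ha hr
    exact reach_closed (fun a b hpa hm => fix_one_propagate ν hν0 hν1 ht0 ht1 htfix hpa hm) hr ha
  -- Q-closure
  have Qclo : ∀ a b, (a ∈ F ∨ t a = 1) → 0 < brwM ν a b → (b ∈ F ∨ t b = 1) := by
    intro a b hQ hm
    rcases hQ with haF | ha1
    · by_cases hb : t b = 1
      · exact Or.inr hb
      · exact Or.inl (CL a haF b hm (lt_of_le_of_ne (ht1 b) hb))
    · exact Or.inr (fix_one_propagate ν hν0 hν1 ht0 ht1 htfix ha1 hm)
  -- the descent step
  have hdes : ∀ y ∈ F, ∃ y', y' ∈ F ∧ brwReach ν y y' ∧ ¬ brwReach ν y' y := by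
    intro y hyF
    obtain ⟨w₁, hcomm, hlt⟩ := hass y
    have htyB : t y < 1 := hyF.1.1
    have hw₁F : w₁ ∈ F := by
      have hq := reach_closed Qclo hcomm.2 (Or.inl hyF)
      rcases hq with h | h
      · exact h
      · exfalso
        have := Aclo w₁ y h hcomm.1
        linarith
    have htw₁B : t w₁ < 1 := hw₁F.1.1
    -- find offspring with class-count ≠ 1
    have hbad : ∃ f, 0 < ν w₁ f ∧
        (∑ u ∈ f.support, if brwComm ν u w₁ then f u else 0) ≠ 1 := by
      by_contra hc
      push_neg at hc
      have hvanish : ∀ f : Y →₀ ℕ,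
          (∑ u ∈ f.support, if brwComm ν u w₁ then f u else 0) ≠ 1 → ν w₁ f = 0 := by
        intro f hf
        by_contra hne
        exact hf (hc f (lt_of_le_of_ne (hν0 w₁ f) (Ne.symm hne)))
      have heq1 : (∑' f : {f : Y →₀ ℕ //
          (∑ u ∈ f.support, if brwComm ν u w₁ then f u else 0) = 1}, ν w₁ f.val) = 1 := by
        have hcast : (∑' f : {f : Y →₀ ℕ //
            (∑ u ∈ f.support, if brwComm ν u w₁ then f u else 0) = 1}, ν w₁ f.val)
            = ∑' f, Set.indicator {f : Y →₀ ℕ |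
              (∑ u ∈ f.support, if brwComm ν u w₁ then f u else 0) = 1} (ν w₁) f :=
          tsum_subtype _ _
        rw [hcast]
        have : Set.indicator {f : Y →₀ ℕ |
            (∑ u ∈ f.support, if brwComm ν u w₁ then f u else 0) = 1} (ν w₁) = ν w₁ := by
          funext f
          by_cases hf : (∑ u ∈ f.support, if brwComm ν u w₁ then f u else 0) = 1
          · exact Set.indicator_of_mem (show f ∈ {f : Y →₀ ℕ |
              (∑ u ∈ f.support, if brwComm ν u w₁ then f u else 0) = 1} from hf) (ν w₁)
          · rw [Set.indicator_of_notMem (show f ∉ {f : Y →₀ ℕ |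
              (∑ u ∈ f.support, if brwComm ν u w₁ then f u else 0) = 1} from hf) (ν w₁),
              hvanish f hf]
        rw [this]; exact hν1 w₁
      linarith
    obtain ⟨f₀, hf₀, hcount⟩ := hbad
    obtain ⟨y₂, hT, hfy₂, hy₂F⟩ := Fstep w₁ hw₁F f₀ hf₀
    have hy₂supp : y₂ ∈ f₀.support := by
      have : y₂ ∈ f₀.support.filter (fun u => t u < 1) := by rw [hT]; simp
      exact (Finset.mem_filter.mp this).1
    have hcnt : (∑ u ∈ f₀.support, if brwComm ν u w₁ then f₀ u else 0)
        = if brwComm ν y₂ w₁ then f₀ y₂ else 0 := by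
      apply Finset.sum_eq_single y₂
      · intro u hu hne
        by_cases hcm : brwComm ν u w₁
        · exfalso
          have htu : t u < 1 := by
            rcases lt_or_eq_of_le (ht1 u) with h | h
            · exact h
            · exfalso
              have := Aclo u w₁ h hcm.1
              linarith
          have : u ∈ f₀.support.filter (fun v => t v < 1) :=
            Finset.mem_filter.mpr ⟨hu, htu⟩
          rw [hT] at this
          exact hne (Finset.mem_singleton.mp this)
        · simp [hcm]
      · intro h; exact absurd hy₂supp h
    have hncomm : ¬ brwComm ν y₂ w₁ := by
      intro hcm
      rw [hcnt, if_pos hcm, hfy₂] at hcount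
      exact hcount rfl
    have hreach : 0 < brwM ν w₁ y₂ := by
      have hsummM : Summable (fun f => ν w₁ f * (f y₂ : ℝ)) := by
        apply Summable.of_nonneg_of_le
          (fun f => mul_nonneg (hν0 w₁ f) (by positivity)) _ (summable_mu ν hν1 w₁)
        intro f
        by_cases hν : 0 < ν w₁ f
        · obtain ⟨c, hTc, hfc, hcF⟩ := Fstep w₁ hw₁F f hν
          by_cases hfy : f y₂ = 0
          · rw [hfy]; simp; exact hν0 w₁ f
          · have : y₂ ∈ f.support.filter (fun v => t v < 1) :=
              Finset.mem_filter.mpr ⟨Finsupp.mem_support_iff.mpr hfy, hy₂F.1.1⟩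
            rw [hTc] at this
            have heqc : y₂ = c := Finset.mem_singleton.mp this
            rw [heqc, hfc]
            simp
        · have : ν w₁ f = 0 := le_antisymm (not_lt.mp hν) (hν0 w₁ f)
          rw [this]; simp
      have hge := Summable.le_tsum hsummM f₀ (fun j _ => mul_nonneg (hν0 w₁ j) (by positivity))
      have : (0:ℝ) < ν w₁ f₀ * (f₀ y₂ : ℝ) := by rw [hfy₂]; simpa using hf₀
      calc (0:ℝ) < ν w₁ f₀ * (f₀ y₂ : ℝ) := this
        _ ≤ ∑' f, ν w₁ f * (f y₂ : ℝ) := hge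
        _ = brwM ν w₁ y₂ := rfl
    have hnreach : ¬ brwReach ν y₂ w₁ :=
      fun hr => hncomm ⟨hr, Relation.ReflTransGen.single hreach⟩
    exact ⟨y₂, hy₂F, hcomm.2.trans (Relation.ReflTransGen.single hreach),
      fun hr => hnreach (hr.trans hcomm.2)⟩
  exact no_descent ν F hdes ys hysF


section Iter
variable {W : Type*} (ν : W → (W →₀ ℕ) → ℝ) (h0 : ∀ x f, 0 ≤ ν x f)
  (h1 : ∀ x, ∑' f, ν x f = 1)
include h0 h1

lemma iterate_bounds {a : W → ℝ} (ha0 : ∀ y, 0 ≤ a y) (ha1 : ∀ y, a y ≤ 1) :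
    ∀ n, (∀ y, 0 ≤ (brwGF ν)^[n] a y) ∧ (∀ y, (brwGF ν)^[n] a y ≤ 1) := by
  intro n
  induction n with
  | zero => exact ⟨ha0, ha1⟩
  | succ n ih =>
      constructor <;> intro y <;> rw [Function.iterate_succ_apply']
      · exact GF_nonneg ν h0 ih.1 y
      · exact GF_le_one ν h0 h1 ih.1 ih.2 y

lemma iterate_mono_arg {a b : W → ℝ} (ha0 : ∀ y, 0 ≤ a y) (hab : ∀ y, a y ≤ b y)
    (hb1 : ∀ y, b y ≤ 1) : ∀ n y, (brwGF ν)^[n] a y ≤ (brwGF ν)^[n] b y := by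
  intro n
  induction n with
  | zero => exact hab
  | succ n ih =>
      intro y
      rw [Function.iterate_succ_apply', Function.iterate_succ_apply']
      have ha1 : ∀ y, a y ≤ 1 := fun y => le_trans (hab y) (hb1 y)
      have hb0 : ∀ y, 0 ≤ b y := fun y => le_trans (ha0 y) (hab y)
      exact GF_mono ν h0 h1 (iterate_bounds ν h0 h1 ha0 ha1 n).1 ih
        (iterate_bounds ν h0 h1 hb0 hb1 n).2 y

lemma iterate_limit {a : W → ℝ} (ha0 : ∀ y, 0 ≤ a y) (ha1 : ∀ y, a y ≤ 1)
    (hstep : ∀ y, a y ≤ brwGF ν a y) :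
    ∃ L : W → ℝ, (∀ y, 0 ≤ L y) ∧ (∀ y, L y ≤ 1) ∧ (∀ y, brwGF ν L y = L y) ∧
      (∀ n y, (brwGF ν)^[n] a y ≤ L y) ∧
      (∀ y, Tendsto (fun n => (brwGF ν)^[n] a y) atTop (nhds (L y))) := by
  have hbnd := iterate_bounds ν h0 h1 ha0 ha1
  have hGa0 : ∀ y, 0 ≤ brwGF ν a y := fun y => GF_nonneg ν h0 ha0 y
  have hGa1 : ∀ y, brwGF ν a y ≤ 1 := fun y => GF_le_one ν h0 h1 ha0 ha1 y
  have hsucc : ∀ n y, (brwGF ν)^[n] a y ≤ (brwGF ν)^[n+1] a y := by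
    intro n y
    have : (brwGF ν)^[n+1] a = (brwGF ν)^[n] (brwGF ν a) := Function.iterate_succ_apply _ _ _
    rw [this]
    exact iterate_mono_arg ν h0 h1 ha0 hstep hGa1 n y
  have hmono : ∀ y, Monotone (fun n => (brwGF ν)^[n] a y) :=
    fun y => monotone_nat_of_le_succ (fun n => hsucc n y)
  have hbdd : ∀ y, BddAbove (Set.range (fun n => (brwGF ν)^[n] a y)) := by
    intro y
    refine ⟨1, ?_⟩
    rintro v ⟨n, rfl⟩
    exact (hbnd n).2 y
  set L : W → ℝ := fun y => ⨆ n, (brwGF ν)^[n] a y with hLdef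
  have htend : ∀ y, Tendsto (fun n => (brwGF ν)^[n] a y) atTop (nhds (L y)) :=
    fun y => tendsto_atTop_ciSup (hmono y) (hbdd y)
  have hle : ∀ n y, (brwGF ν)^[n] a y ≤ L y := fun n y => le_ciSup (hbdd y) n
  have hL0 : ∀ y, 0 ≤ L y := fun y => le_trans ((hbnd 0).1 y) (hle 0 y)
  have hL1 : ∀ y, L y ≤ 1 := fun y => ciSup_le (fun n => (hbnd n).2 y)
  refine ⟨L, hL0, hL1, ?_, hle, htend⟩
  intro y
  have h1' : Tendsto (fun n => (brwGF ν)^[n+1] a y) atTop (nhds (L y)) :=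
    (htend y).comp (tendsto_add_atTop_nat 1)
  have h2 : Tendsto (fun n => brwGF ν ((brwGF ν)^[n] a) y) atTop (nhds (brwGF ν L y)) := by
    have hre : ∀ (b : W → ℝ), brwGF ν b y = ∑' f, ν y f * pprod b f := fun b => brwGF_eq ν b y
    have hdc : Tendsto (fun n => ∑' f, ν y f * pprod ((brwGF ν)^[n] a) f) atTop
        (nhds (∑' f, ν y f * pprod L f)) := by
      apply tendsto_tsum_of_dominated_convergence (bound := ν y) (summable_mu ν h1 y)
      · intro f
        apply Tendsto.const_mul
        rw [show pprod L f = ∏ u ∈ f.support, L u ^ f u from rfl]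
        apply tendsto_finset_prod
        intro u _
        exact Tendsto.pow (htend u) _
      · apply Eventually.of_forall
        intro n f
        rw [Real.norm_eq_abs, abs_of_nonneg (mul_nonneg (h0 y f) (pprod_nonneg ((hbnd n).1) f))]
        exact mul_le_of_le_one_right (h0 y f) (pprod_le_one ((hbnd n).1) ((hbnd n).2) f)
    have hfun : (fun n => ∑' f, ν y f * pprod ((brwGF ν)^[n] a) f)
        = fun n => brwGF ν ((brwGF ν)^[n] a) y := funext fun n => (hre _).symm
    rw [hfun] at hdc
    rw [hre L]
    exact hdc
  have h3 : (fun n => brwGF ν ((brwGF ν)^[n] a) y) = fun n => (brwGF ν)^[n+1] a y := by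
    funext n
    rw [Function.iterate_succ_apply']
  rw [h3] at h2
  exact tendsto_nhds_unique h2 h1'

end Iter

set_option maxHeartbeats 1000000 in
/-- the projection identity for locally isomorphic BRWs. -/
lemma GF_comp {X Y : Type*} (μ : X → (X →₀ ℕ) → ℝ) (ν : Y → (Y →₀ ℕ) → ℝ) (g : X → Y)
    (hiso : brwLocIso μ ν g) (hμ0 : ∀ x f, 0 ≤ μ x f) (hμ1 : ∀ x, ∑' f, μ x f = 1)
    (v : Y → ℝ) (hv0 : ∀ y, 0 ≤ v y) (hv1 : ∀ y, v y ≤ 1) (x : X) :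
    brwGF μ (fun x' => v (g x')) x = brwGF ν v (g x) := by
  classical
  have hppr : ∀ f : X →₀ ℕ, pprod (fun x' => v (g x')) f = pprod v (Finsupp.mapDomain g f) := by
    intro f
    rw [pprod_eq_prod, pprod_eq_prod]
    exact (Finsupp.prod_mapDomain_index (f := g) (s := f) (h := fun b n => v b ^ n)
      (fun b => pow_zero (v b)) (fun b m n => pow_add (v b) m n)).symm
  have hvg0 : ∀ x', 0 ≤ v (g x') := fun x' => hv0 (g x')
  have hvg1 : ∀ x', v (g x') ≤ 1 := fun x' => hv1 (g x')
  set F : (X →₀ ℕ) → ℝ := fun f => μ x f * pprod v (Finsupp.mapDomain g f) with hFdef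
  have hFeq : (fun f => μ x f * pprod (fun x' => v (g x')) f) = F :=
    funext fun f => by rw [hFdef]; simp only; rw [hppr f]
  have hFsum : Summable F := hFeq ▸ summable_term μ hμ0 hμ1 hvg0 hvg1 x
  set e := Equiv.sigmaFiberEquiv (fun f : X →₀ ℕ => Finsupp.mapDomain g f) with hedef
  have hFse : Summable (fun p => F (e p)) := e.summable_iff.mpr hFsum
  have h1 : brwGF μ (fun x' => v (g x')) x = ∑' f, F f := by
    rw [brwGF_eq, hFeq]
  have h2 : ∑' f, F f = ∑' (h : Y →₀ ℕ), ∑' (c : {f : X →₀ ℕ // Finsupp.mapDomain g f = h}),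
      F c.val := by
    rw [← e.tsum_eq F]
    rw [Summable.tsum_sigma hFse]
    rfl
  have h3 : ∀ h : Y →₀ ℕ, (∑' (c : {f : X →₀ ℕ // Finsupp.mapDomain g f = h}), F c.val)
      = ν (g x) h * pprod v h := by
    intro h
    have : ∀ c : {f : X →₀ ℕ // Finsupp.mapDomain g f = h}, F c.val = μ x c.val * pprod v h := by
      rintro ⟨f, hf⟩
      rw [hFdef]
      simp only
      rw [hf]
    rw [tsum_congr this, tsum_mul_right, hiso x h]
  rw [h1, h2, tsum_congr h3, ← brwGF_eq]


end BRWProof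

open BRWProof in
/-- Theorem 3.4(1): the generating function of an `𝓕`-BRW has at most one fixed
point `z` with `sup_x z(x) < 1`, namely `z = q̄`. -/
theorem FBRW_unique_fixed_point_sup_lt_one
    {X Y : Type*} [Countable X] [Fintype Y]
    (μ : X → (X →₀ ℕ) → ℝ) (ν : Y → (Y →₀ ℕ) → ℝ)
    (hμ0 : ∀ x f, 0 ≤ μ x f) (hμ1 : ∀ x, ∑' f, μ x f = 1)
    (hν0 : ∀ y f, 0 ≤ ν y f) (hν1 : ∀ y, ∑' f, ν y f = 1)
    (g : X → Y) (hg : Function.Surjective g)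
    (hiso : brwLocIso μ ν g)
    (hass : brwAssumption1 ν)
    (qbar : X → ℝ)
    (hqbar : ∀ x, Tendsto (fun n => (brwGF μ)^[n] (fun _ => 0) x) atTop (nhds (qbar x)))
    (z : X → ℝ) (hz01 : ∀ x, z x ∈ Set.Icc (0 : ℝ) 1)
    (hfix : brwGF μ z = z)
    (hsup : ∃ c : ℝ, c < 1 ∧ ∀ x, z x ≤ c) :
    z = qbar := by
  classical
  rcases isEmpty_or_nonempty X with hX | hX
  · funext x; exact (IsEmpty.false x).elim
  obtain ⟨x₀⟩ := hX
  obtain ⟨c, hc1, hcz⟩ := hsup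
  have hz0 : ∀ x, 0 ≤ z x := fun x => (hz01 x).1
  have hz1 : ∀ x, z x ≤ 1 := fun x => (hz01 x).2
  have hc0 : (0:ℝ) ≤ c := le_trans (hz0 x₀) (hcz x₀)
  have hzfix : ∀ x, brwGF μ z x = z x := fun x => congrFun hfix x
  -- the fiberwise supremum ζ
  have hfibne : ∀ y : Y, Nonempty {x // g x = y} := fun y => by
    obtain ⟨x, hx⟩ := hg y; exact ⟨⟨x, hx⟩⟩
  set ζ : Y → ℝ := fun y => ⨆ x : {x // g x = y}, z x.1 with hζdef
  have hbdd : ∀ y : Y, BddAbove (Set.range fun x : {x // g x = y} => z x.1) := by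
    intro y
    refine ⟨c, ?_⟩
    rintro v ⟨x, rfl⟩
    exact hcz x.1
  have hzζ : ∀ x, z x ≤ ζ (g x) := fun x => le_ciSup (hbdd (g x)) ⟨x, rfl⟩
  have hζc : ∀ y, ζ y ≤ c := fun y => by
    haveI := hfibne y
    exact ciSup_le (fun x => hcz x.1)
  have hζ0 : ∀ y, 0 ≤ ζ y := fun y => by
    obtain ⟨x⟩ := hfibne y
    exact le_trans (hz0 x.1) (le_ciSup (hbdd y) x)
  have hζ1 : ∀ y, ζ y ≤ 1 := fun y => le_trans (hζc y) (le_of_lt hc1)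
  -- ζ is subinvariant
  have hζstep : ∀ y, ζ y ≤ brwGF ν ζ y := by
    intro y
    haveI := hfibne y
    apply ciSup_le
    intro x
    calc z x.1 = brwGF μ z x.1 := (hzfix x.1).symm
      _ ≤ brwGF μ (fun x' => ζ (g x')) x.1 :=
          GF_mono μ hμ0 hμ1 hz0 (fun x' => hzζ x') (fun x' => hζ1 (g x')) x.1
      _ = brwGF ν ζ (g x.1) := GF_comp μ ν g hiso hμ0 hμ1 ζ hζ0 hζ1 x.1
      _ = brwGF ν ζ y := by rw [x.2]
  -- the two monotone limits (q and s*)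
  obtain ⟨q, hq0, hq1, hqfix, hqle, hqt⟩ := iterate_limit ν hν0 hν1
    (a := fun _ => (0:ℝ)) (fun _ => le_refl 0) (fun _ => zero_le_one)
    (fun y => GF_nonneg ν hν0 (fun _ => le_refl 0) y)
  obtain ⟨sst, hst0, hst1, hstfix, hstle, hstt⟩ := iterate_limit ν hν0 hν1
    (a := ζ) hζ0 hζ1 hζstep
  -- q ≤ s*
  have hqs : ∀ y, q y ≤ sst y := by
    intro y
    apply le_of_tendsto_of_tendsto' (hqt y) (hstt y)
    intro n
    exact iterate_mono_arg ν hν0 hν1 (fun _ => le_refl 0) hζ0 hζ1 n y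
  -- s* ≤ q + c(1-q)
  have hckey : ∀ n y, (brwGF ν)^[n] ζ y
      ≤ (brwGF ν)^[n] (fun _ => (0:ℝ)) y + c * (1 - (brwGF ν)^[n] (fun _ => (0:ℝ)) y) := by
    intro n
    induction n with
    | zero => intro y; simpa using hζc y
    | succ n ih =>
        intro y
        rw [Function.iterate_succ_apply', Function.iterate_succ_apply']
        have hb0 := (iterate_bounds ν hν0 hν1 (a := fun _ => (0:ℝ))
          (fun _ => le_refl 0) (fun _ => zero_le_one) n).1
        have hb1 := (iterate_bounds ν hν0 hν1 (a := fun _ => (0:ℝ))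
          (fun _ => le_refl 0) (fun _ => zero_le_one) n).2
        have hzb0 := (iterate_bounds ν hν0 hν1 (a := ζ) hζ0 hζ1 n).1
        have hcb1 : ∀ u, (brwGF ν)^[n] (fun _ => (0:ℝ)) u
            + c * (1 - (brwGF ν)^[n] (fun _ => (0:ℝ)) u) ≤ 1 := by
          intro u
          have := hb1 u
          nlinarith
        calc brwGF ν ((brwGF ν)^[n] ζ) y
            ≤ brwGF ν (fun u => (brwGF ν)^[n] (fun _ => (0:ℝ)) u
                + c * (1 - (brwGF ν)^[n] (fun _ => (0:ℝ)) u)) y :=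
              GF_mono ν hν0 hν1 hzb0 ih hcb1 y
          _ ≤ brwGF ν ((brwGF ν)^[n] (fun _ => (0:ℝ))) y
                + c * (1 - brwGF ν ((brwGF ν)^[n] (fun _ => (0:ℝ))) y) :=
              GF_convex ν hν0 hν1 hb0 hb1 hc0 (le_of_lt hc1) y
  have hsq : ∀ y, sst y ≤ q y + c * (1 - q y) := by
    intro y
    have hRT : Tendsto (fun n => (brwGF ν)^[n] (fun _ => (0:ℝ)) y
        + c * (1 - (brwGF ν)^[n] (fun _ => (0:ℝ)) y)) atTop (nhds (q y + c * (1 - q y))) := by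
      have h := hqt y
      exact h.add ((tendsto_const_nhds.sub h).const_mul c)
    exact le_of_tendsto_of_tendsto' (hstt y) hRT (fun n => hckey n y)
  -- apply the main uniqueness lemma
  have hmain : ∀ y, sst y ≤ q y := by
    apply main_le ν hν0 hν1 hass q sst hq0 hq1 hst0 hst1 hqs _ hqfix hstfix
    intro y hy
    have := hsq y
    nlinarith
  -- identify qbar with q ∘ g
  have hitcomp : ∀ n x, (brwGF μ)^[n] (fun _ => (0:ℝ)) x
      = (brwGF ν)^[n] (fun _ => (0:ℝ)) (g x) := by
    intro n
    induction n with
    | zero => intro x; rfl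
    | succ n ih =>
        intro x
        rw [Function.iterate_succ_apply', Function.iterate_succ_apply']
        have hfun : (brwGF μ)^[n] (fun _ => (0:ℝ))
            = fun x' => (brwGF ν)^[n] (fun _ => (0:ℝ)) (g x') := funext ih
        rw [hfun]
        exact GF_comp μ ν g hiso hμ0 hμ1 _
          ((iterate_bounds ν hν0 hν1 (fun _ => le_refl 0) (fun _ => zero_le_one) n).1)
          ((iterate_bounds ν hν0 hν1 (fun _ => le_refl 0) (fun _ => zero_le_one) n).2) x
  have hqbarq : ∀ x, qbar x = q (g x) := by
    intro x
    have h2 : Tendsto (fun n => (brwGF μ)^[n] (fun _ => (0:ℝ)) x) atTop (nhds (q (g x))) := by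
      have h := hqt (g x)
      have : (fun n => (brwGF ν)^[n] (fun _ => (0:ℝ)) (g x))
          = fun n => (brwGF μ)^[n] (fun _ => (0:ℝ)) x := funext fun n => (hitcomp n x).symm
      rw [this] at h
      exact h
    exact tendsto_nhds_unique (hqbar x) h2
  -- z ≤ s* ∘ g
  have hzit : ∀ n x, z x ≤ (brwGF ν)^[n] ζ (g x) := by
    intro n
    induction n with
    | zero => exact fun x => hzζ x
    | succ n ih =>
        intro x
        rw [Function.iterate_succ_apply']
        have hybd := iterate_bounds ν hν0 hν1 (a := ζ) hζ0 hζ1 n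
        calc z x = brwGF μ z x := (hzfix x).symm
          _ ≤ brwGF μ (fun x' => (brwGF ν)^[n] ζ (g x')) x :=
              GF_mono μ hμ0 hμ1 hz0 ih (fun x' => hybd.2 (g x')) x
          _ = brwGF ν ((brwGF ν)^[n] ζ) (g x) :=
              GF_comp μ ν g hiso hμ0 hμ1 _ hybd.1 hybd.2 x
  have hzs : ∀ x, z x ≤ sst (g x) := fun x =>
    ge_of_tendsto (hstt (g x)) (Eventually.of_forall fun n => hzit n x)
  -- qbar ≤ z
  have hq0le : ∀ n x, (brwGF μ)^[n] (fun _ => (0:ℝ)) x ≤ z x := by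
    intro n
    induction n with
    | zero => exact fun x => hz0 x
    | succ n ih =>
        intro x
        rw [Function.iterate_succ_apply']
        have hxbd := iterate_bounds μ hμ0 hμ1 (a := fun _ => (0:ℝ))
          (fun _ => le_refl 0) (fun _ => zero_le_one) n
        calc brwGF μ ((brwGF μ)^[n] (fun _ => (0:ℝ))) x ≤ brwGF μ z x :=
              GF_mono μ hμ0 hμ1 hxbd.1 ih hz1 x
          _ = z x := hzfix x
  funext x
  apply le_antisymm
  · rw [hqbarq x]
    exact le_trans (hzs x) (hmain (g x))
  · exact le_of_tendsto (hqbar x) (Eventually.of_forall fun n => hq0le n x)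
end

section
/- Generating-function form of Lemma 5.2: Let (X,μ) be a BRW with generating function G, and let x₀ ∈ X. Suppose there exist x̄ ∈ X with x̄ ⇌ x₀ and f ∈ S_X such that μ_{x̄}(f) > 0 and Σ_{w : w⇌x₀} f(w) ≥ 2. Then there exists n̄ ≥ 1 such that the function t ↦ G^{(n̄)}(e_t | x₀) is strictly convex on [0,1], where e_t ∈ [0,1]^X is defined by e_t(x₀) := t and e_t(y) := 1 for y ≠ x₀. (Probabilistically: starting with one particle at x₀, with positive probability there are at least 2 particles at x₀ in generation n̄; the stated function is the probability generating function of the number of particles at x₀ in generation n̄.) -/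
/-! ### Auxiliary development -/

section GRepSection

universe u

open Set

/-- A function `g` that on `[0,1]` is given by a generalized power series with
nonnegative coefficients summing to `1`, with some mass at degree at least `k`. -/
def GRep (g : ℝ → ℝ) (k : ℕ) : Prop :=
  ∃ (ι : Type u) (a : ι → ℝ) (d : ι → ℕ),
    (∀ i, 0 ≤ a i) ∧ Summable a ∧ (∑' i, a i) = 1 ∧
    (∀ t ∈ Set.Icc (0 : ℝ) 1, g t = ∑' i, a i * t ^ d i) ∧
    (∃ i, 0 < a i ∧ k ≤ d i)

lemma grep_term_summable {ι : Type*} {a : ι → ℝ} (d : ι → ℕ)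
    (ha : ∀ i, 0 ≤ a i) (hs : Summable a) {t : ℝ} (ht : t ∈ Set.Icc (0 : ℝ) 1) :
    Summable fun i => a i * t ^ d i :=
  hs.of_nonneg_of_le (fun i => mul_nonneg (ha i) (pow_nonneg ht.1 _))
    (fun i => mul_le_of_le_one_right (ha i) (pow_le_one₀ ht.1 ht.2))

lemma exists_pos_of_tsum_pos {J : Type*} {f : J → ℝ} (h0 : ∀ j, 0 ≤ f j)
    (h : 0 < ∑' j, f j) : ∃ j, 0 < f j := by
  by_contra hc
  push_neg at hc
  have hz : f = fun _ => 0 := funext fun j => le_antisymm (hc j) (h0 j)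
  rw [hz] at h
  simp at h

lemma summable_of_tsum_eq_one {J : Type*} {f : J → ℝ} (h : ∑' j, f j = 1) :
    Summable f := by
  by_contra hc
  rw [tsum_eq_zero_of_not_summable hc] at h
  norm_num at h

lemma GRep.mono {g : ℝ → ℝ} {k l : ℕ} (h : GRep.{u} g k) (hlk : l ≤ k) : GRep.{u} g l := by
  obtain ⟨ι, a, d, ha, hs, h1, hrep, i, hi, hd⟩ := h
  exact ⟨ι, a, d, ha, hs, h1, hrep, i, hi, le_trans hlk hd⟩

lemma GRep_one : GRep.{u} (fun _ => (1 : ℝ)) 0 := by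
  refine ⟨PUnit, fun _ => 1, fun _ => 0, fun _ => zero_le_one, ?_, ?_, ?_,
    ⟨PUnit.unit, one_pos, le_refl 0⟩⟩
  · exact (hasSum_fintype _).summable
  · simp [tsum_fintype]
  · intro t _; simp [tsum_fintype]

lemma GRep_id : GRep.{u} (fun t => t) 1 := by
  refine ⟨PUnit, fun _ => 1, fun _ => 1, fun _ => zero_le_one, ?_, ?_, ?_,
    ⟨PUnit.unit, one_pos, le_refl 1⟩⟩
  · exact (hasSum_fintype _).summable
  · simp [tsum_fintype]
  · intro t _; simp [tsum_fintype]

lemma prod_tsum_helper {ι κ : Type*} {a : ι → ℝ} {b : κ → ℝ}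
    (ha : ∀ i, 0 ≤ a i) (hb : ∀ j, 0 ≤ b j) (hsa : Summable a) (hsb : Summable b) :
    Summable (fun p : ι × κ => a p.1 * b p.2) ∧
      (∑' p : ι × κ, a p.1 * b p.2) = (∑' i, a i) * (∑' j, b j) := by
  have hfib : ∀ i, Summable fun j => a i * b j := fun i => hsb.mul_left _
  have hsum : Summable (fun p : ι × κ => a p.1 * b p.2) := by
    refine (summable_prod_of_nonneg ?_).2 ⟨hfib, ?_⟩
    · intro p; exact mul_nonneg (ha _) (hb _)
    · simp only [tsum_mul_left]
      exact hsa.mul_right _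
  refine ⟨hsum, ?_⟩
  rw [Summable.tsum_prod' hsum hfib]
  simp only [tsum_mul_left]
  rw [tsum_mul_right]

lemma GRep.mul {g h : ℝ → ℝ} {k l : ℕ} (hg : GRep.{u} g k) (hh : GRep.{u} h l) :
    GRep.{u} (fun t => g t * h t) (k + l) := by
  obtain ⟨ι, a, d, ha, hsa, h1a, hra, ia, hia, hda⟩ := hg
  obtain ⟨κ', b, e, hb, hsb, h1b, hrb, ib, hib, hdb⟩ := hh
  refine ⟨ι × κ', fun p => a p.1 * b p.2, fun p => d p.1 + e p.2,
    fun p => mul_nonneg (ha _) (hb _), (prod_tsum_helper ha hb hsa hsb).1, ?_, ?_,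
    ⟨(ia, ib), mul_pos hia hib, add_le_add hda hdb⟩⟩
  · rw [(prod_tsum_helper ha hb hsa hsb).2, h1a, h1b, one_mul]
  · intro t ht
    have key := prod_tsum_helper (a := fun i => a i * t ^ d i) (b := fun j => b j * t ^ e j)
      (fun i => mul_nonneg (ha i) (pow_nonneg ht.1 _))
      (fun j => mul_nonneg (hb j) (pow_nonneg ht.1 _))
      (grep_term_summable d ha hsa ht) (grep_term_summable e hb hsb ht)
    show g t * h t = ∑' p : ι × κ', a p.1 * b p.2 * t ^ (d p.1 + e p.2)
    calc g t * h t = (∑' i, a i * t ^ d i) * (∑' j, b j * t ^ e j) := by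
          rw [hra t ht, hrb t ht]
      _ = ∑' p : ι × κ', (a p.1 * t ^ d p.1) * (b p.2 * t ^ e p.2) := key.2.symm
      _ = ∑' p : ι × κ', a p.1 * b p.2 * t ^ (d p.1 + e p.2) :=
          tsum_congr fun p => by rw [pow_add]; ring

lemma GRep.pow {g : ℝ → ℝ} {k : ℕ} (hg : GRep.{u} g k) : ∀ m : ℕ,
    GRep.{u} (fun t => g t ^ m) (m * k)
  | 0 => by simpa using GRep_one
  | (m + 1) => by
      have h := (GRep.pow hg m).mul hg
      have hdeg : m * k + k = (m + 1) * k := by ring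
      rw [hdeg] at h
      simpa [pow_succ] using h

lemma GRep.finsetProd {X : Type u} (s : Finset X) (g : X → ℝ → ℝ) (e κ : X → ℕ)
    (h : ∀ y ∈ s, GRep.{u} (g y) (κ y)) :
    GRep.{u} (fun t => ∏ y ∈ s, g y t ^ e y) (∑ y ∈ s, e y * κ y) := by
  classical
  revert h
  induction s using Finset.induction with
  | empty => intro _; simpa using GRep_one
  | @insert x s' hx ih =>
      intro h
      simp only [Finset.prod_insert hx, Finset.sum_insert hx]
      exact ((h x (Finset.mem_insert_self _ _)).pow (e x)).mul
        (ih fun y hy => h y (Finset.mem_insert_of_mem hy))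

set_option maxHeartbeats 1000000 in
open Classical in
lemma GRep.mixture {J : Type u} (w : J → ℝ) (hw0 : ∀ j, 0 ≤ w j) (hws : Summable w)
    (hw1 : ∑' j, w j = 1) (g : J → ℝ → ℝ) (k : ℕ) (j₀ : J) (hj₀ : 0 < w j₀)
    (hg : ∀ j, GRep.{u} (g j) (if j = j₀ then k else 0)) :
    GRep.{u} (fun t => ∑' j, w j * g j t) k := by
  choose ι a d ha hsa h1a hra hw using hg
  have hnn : ∀ p : Σ j, ι j, 0 ≤ w p.1 * a p.1 p.2 :=
    fun p => mul_nonneg (hw0 _) (ha _ _)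
  have hfib1 : ∀ j, Summable fun i => w j * a j i := fun j => (hsa j).mul_left _
  have hsig1 : Summable (fun p : Σ j, ι j => w p.1 * a p.1 p.2) := by
    refine (summable_sigma_of_nonneg hnn).2 ⟨hfib1, ?_⟩
    simp only [tsum_mul_left, h1a, mul_one]
    exact hws
  obtain ⟨i₀, hi₀, hd₀⟩ := hw j₀
  simp only [if_pos rfl] at hd₀
  refine ⟨Σ j, ι j, fun p => w p.1 * a p.1 p.2, fun p => d p.1 p.2, hnn, hsig1, ?_, ?_,
    ⟨⟨j₀, i₀⟩, mul_pos hj₀ hi₀, hd₀⟩⟩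
  · show (∑' p : Σ j, ι j, w p.1 * a p.1 p.2) = 1
    rw [Summable.tsum_sigma' hfib1 hsig1]
    simp only [tsum_mul_left, h1a, mul_one]
    exact hw1
  · intro t ht
    have hfib : ∀ j, Summable fun i => w j * (a j i * t ^ d j i) :=
      fun j => (grep_term_summable (d j) (ha j) (hsa j) ht).mul_left _
    have hval : ∀ j, (∑' i, w j * (a j i * t ^ d j i)) = w j * g j t := fun j => by
      rw [tsum_mul_left, ← hra j t ht]
    have hgle : ∀ j, g j t ≤ 1 := fun j => by
      rw [hra j t ht, ← h1a j]
      exact Summable.tsum_le_tsum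
        (fun i => mul_le_of_le_one_right (ha j i) (pow_le_one₀ ht.1 ht.2))
        (grep_term_summable (d j) (ha j) (hsa j) ht) (hsa j)
    have hgnn : ∀ j, 0 ≤ g j t := fun j => by
      rw [hra j t ht]
      exact tsum_nonneg fun i => mul_nonneg (ha j i) (pow_nonneg ht.1 _)
    have hsig : Summable (fun p : Σ j, ι j => w p.1 * (a p.1 p.2 * t ^ d p.1 p.2)) := by
      refine (summable_sigma_of_nonneg
        (fun p => mul_nonneg (hw0 _) (mul_nonneg (ha _ _) (pow_nonneg ht.1 _)))).2
        ⟨hfib, ?_⟩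
      refine hws.of_nonneg_of_le (fun j => ?_) (fun j => ?_)
      · rw [hval j]; exact mul_nonneg (hw0 j) (hgnn j)
      · rw [hval j]; exact mul_le_of_le_one_right (hw0 j) (hgle j)
    show (∑' j, w j * g j t) = ∑' p : Σ j, ι j, w p.1 * a p.1 p.2 * t ^ d p.1 p.2
    calc (∑' j, w j * g j t) = ∑' j, ∑' i, w j * (a j i * t ^ d j i) :=
          tsum_congr fun j => (hval j).symm
      _ = ∑' p : Σ j, ι j, w p.1 * (a p.1 p.2 * t ^ d p.1 p.2) :=
          (Summable.tsum_sigma' hfib hsig).symm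
      _ = ∑' p : Σ j, ι j, w p.1 * a p.1 p.2 * t ^ d p.1 p.2 :=
          tsum_congr fun p => (mul_assoc _ _ _).symm

lemma GRep.strictConvexOn {g : ℝ → ℝ} (h : GRep.{u} g 2) :
    StrictConvexOn ℝ (Set.Icc (0 : ℝ) 1) g := by
  obtain ⟨ι, a, d, ha, hs, h1, hrep, i₀, hi₀, hd₀⟩ := h
  refine ⟨convex_Icc _ _, fun x hx y hy hxy p q hp hq hpq => ?_⟩
  have hz : p • x + q • y ∈ Set.Icc (0 : ℝ) 1 :=
    (convex_Icc (0 : ℝ) 1) hx hy hp.le hq.le hpq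
  have hsx := grep_term_summable d ha hs hx
  have hsy := grep_term_summable d ha hs hy
  have hsz := grep_term_summable d ha hs hz
  simp only [smul_eq_mul] at hz ⊢
  rw [hrep _ hz, hrep _ hx, hrep _ hy, ← tsum_mul_left, ← tsum_mul_left,
    ← Summable.tsum_add (hsx.mul_left p) (hsy.mul_left q)]
  refine Summable.tsum_lt_tsum (f := fun i => a i * (p * x + q * y) ^ d i) (i := i₀)
    (fun i => ?_) ?_ hsz ((hsx.mul_left p).add (hsy.mul_left q))
  · have hcvx := (convexOn_pow (d i)).2 (Set.mem_Ici.2 hx.1) (Set.mem_Ici.2 hy.1)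
      hp.le hq.le hpq
    simp only [smul_eq_mul] at hcvx
    calc a i * (p * x + q * y) ^ d i ≤ a i * (p * x ^ d i + q * y ^ d i) :=
          mul_le_mul_of_nonneg_left hcvx (ha i)
      _ = p * (a i * x ^ d i) + q * (a i * y ^ d i) := by ring
  · have hcvx := (strictConvexOn_pow hd₀).2 (Set.mem_Ici.2 hx.1) (Set.mem_Ici.2 hy.1)
      hxy hp hq hpq
    simp only [smul_eq_mul] at hcvx
    calc a i₀ * (p * x + q * y) ^ d i₀ < a i₀ * (p * x ^ d i₀ + q * y ^ d i₀) :=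
          mul_lt_mul_of_pos_left hcvx hi₀
      _ = p * (a i₀ * x ^ d i₀) + q * (a i₀ * y ^ d i₀) := by ring

/-! ### BRW-specific lemmas -/

/-- Generation-`n` generating function of the number of particles, as a function of
the variable `t` placed at `x₀`. -/
noncomputable def brwH {X : Type u} [DecidableEq X] (μ : X → (X →₀ ℕ) → ℝ) (x₀ : X)
    (n : ℕ) (t : ℝ) : X → ℝ :=
  (brwGF μ)^[n] (fun y => if y = x₀ then t else 1)

lemma brwH_succ {X : Type u} [DecidableEq X] (μ : X → (X →₀ ℕ) → ℝ) (x₀ : X)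
    (n : ℕ) (t : ℝ) (x : X) :
    brwH μ x₀ (n + 1) t x
      = ∑' f : X →₀ ℕ, μ x f * ∏ y ∈ f.support, brwH μ x₀ n t y ^ f y := by
  rw [brwH, Function.iterate_succ_apply']
  rfl

lemma brw_step {X : Type u} [DecidableEq X] (μ : X → (X →₀ ℕ) → ℝ)
    (hμ0 : ∀ x f, 0 ≤ μ x f) (hμ1 : ∀ x, ∑' f, μ x f = 1) (x₀ : X)
    {n : ℕ} (x : X) (κ : X → ℕ)
    (hall : ∀ y, GRep.{u} (fun t => brwH μ x₀ n t y) (κ y))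
    (f : X →₀ ℕ) (hf : 0 < μ x f) :
    GRep.{u} (fun t => brwH μ x₀ (n + 1) t x) (∑ y ∈ f.support, f y * κ y) := by
  have hμs : Summable (μ x) := summable_of_tsum_eq_one (hμ1 x)
  have hrw : (fun t => brwH μ x₀ (n + 1) t x)
      = fun t => ∑' f' : X →₀ ℕ, μ x f' * ∏ y ∈ f'.support, brwH μ x₀ n t y ^ f' y :=
    funext fun t => brwH_succ μ x₀ n t x
  rw [hrw]
  refine GRep.mixture (μ x) (hμ0 x) hμs (hμ1 x)
    (fun f' t => ∏ y ∈ f'.support, brwH μ x₀ n t y ^ f' y) _ f hf ?_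
  intro f'
  by_cases hf' : f' = f
  · subst hf'
    simp only [if_pos rfl]
    exact GRep.finsetProd f'.support (fun y => fun t => brwH μ x₀ n t y) f' κ
      (fun y _ => hall y)
  · simp only [if_neg hf']
    have h := GRep.finsetProd f'.support (fun y => fun t => brwH μ x₀ n t y) f'
      (fun _ => 0) (fun y _ => (hall y).mono (Nat.zero_le _))
    simpa using h

lemma brw_grep0 {X : Type u} [DecidableEq X] (μ : X → (X →₀ ℕ) → ℝ)
    (hμ0 : ∀ x f, 0 ≤ μ x f) (hμ1 : ∀ x, ∑' f, μ x f = 1) (x₀ : X) :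
    ∀ (n : ℕ) (y : X), GRep.{u} (fun t => brwH μ x₀ n t y) 0
  | 0, y => by
      by_cases hy : y = x₀
      · have h : (fun t => brwH μ x₀ 0 t y) = fun t => t := by
          funext t; simp [brwH, hy]
        rw [h]
        exact GRep_id.mono (Nat.zero_le 1)
      · have h : (fun t => brwH μ x₀ 0 t y) = fun _ => (1 : ℝ) := by
          funext t; simp [brwH, hy]
        rw [h]
        exact GRep_one
  | (n + 1), y => by
      obtain ⟨f, hf⟩ : ∃ f, 0 < μ y f :=
        exists_pos_of_tsum_pos (hμ0 y) (by rw [hμ1 y]; norm_num)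
      have h := brw_step μ hμ0 hμ1 x₀ y (fun _ => 0)
        (fun w => brw_grep0 μ hμ0 hμ1 x₀ n w) f hf
      simpa using h

lemma brw_edgeF {X : Type u} [DecidableEq X] (μ : X → (X →₀ ℕ) → ℝ)
    (hμ0 : ∀ x f, 0 ≤ μ x f) (hμ1 : ∀ x, ∑' f, μ x f = 1) (x₀ : X)
    {n k : ℕ} {x y : X} (f : X →₀ ℕ) (hμf : 0 < μ x f) (hfy : 1 ≤ f y)
    (hk : GRep.{u} (fun t => brwH μ x₀ n t y) k) :
    GRep.{u} (fun t => brwH μ x₀ (n + 1) t x) k := by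
  classical
  have hall : ∀ w, GRep.{u} (fun t => brwH μ x₀ n t w) (if w = y then k else 0) := by
    intro w
    by_cases hw : w = y
    · subst hw; simp only [if_pos rfl]; exact hk
    · simp only [if_neg hw]; exact brw_grep0 μ hμ0 hμ1 x₀ n w
  have h := brw_step μ hμ0 hμ1 x₀ x (fun w => if w = y then k else 0) hall f hμf
  refine h.mono ?_
  have hy : y ∈ f.support := Finsupp.mem_support_iff.2 (by omega)
  have hsum : (∑ w ∈ f.support, f w * (if w = y then k else 0)) = f y * k := by
    simp only [mul_ite, mul_zero]
    rw [Finset.sum_ite_eq' f.support y (fun w => f w * k), if_pos hy]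
  rw [hsum]
  exact le_mul_of_one_le_left (Nat.zero_le k) hfy

lemma brw_reach_lift {X : Type u} [DecidableEq X] (μ : X → (X →₀ ℕ) → ℝ)
    (hμ0 : ∀ x f, 0 ≤ μ x f) (hμ1 : ∀ x, ∑' f, μ x f = 1) (x₀ : X)
    {x y : X} (h : brwReach μ x y) :
    ∃ L : ℕ, ∀ n k, GRep.{u} (fun t => brwH μ x₀ n t y) k →
      GRep.{u} (fun t => brwH μ x₀ (n + L) t x) k := by
  induction h using Relation.ReflTransGen.head_induction_on with
  | refl => exact ⟨0, fun n k hk => hk⟩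
  | @head a c hab _ ih =>
      obtain ⟨L, hL⟩ := ih
      refine ⟨L + 1, fun n k hk => ?_⟩
      have h1 := hL n k hk
      obtain ⟨f, hf⟩ := exists_pos_of_tsum_pos
        (fun f => mul_nonneg (hμ0 _ _) (Nat.cast_nonneg _)) hab
      have hμf : 0 < μ a f := by
        rcases mul_pos_iff.1 hf with ⟨h', _⟩ | ⟨h', _⟩
        · exact h'
        · exact absurd h' (not_lt.2 (hμ0 _ _))
      have hfc : 1 ≤ f c := by
        rcases mul_pos_iff.1 hf with ⟨_, h'⟩ | ⟨_, h'⟩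
        · exact_mod_cast Nat.one_le_iff_ne_zero.2 (by exact_mod_cast h'.ne')
        · exact absurd h' (not_lt.2 (Nat.cast_nonneg _))
      exact brw_edgeF μ hμ0 hμ1 x₀ f hμf hfc h1

end GRepSection

open Classical in
/-- Generating-function form of Lemma 5.2: if some `x̄ ⇌ x₀` can produce at least
two children in the class of `x₀` wpp, then for some `n̄ ≥ 1` the probability
generating function of the number of particles at `x₀` in generation `n̄`
(starting from `x₀`) is strictly convex on `[0,1]`. -/
theorem brw_two_particles_in_generation_n
    {X : Type*} [Countable X] [DecidableEq X] (μ : X → (X →₀ ℕ) → ℝ)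
    (hμ0 : ∀ x f, 0 ≤ μ x f) (hμ1 : ∀ x, ∑' f, μ x f = 1)
    (x₀ : X)
    (hyp : ∃ xb : X, brwComm μ xb x₀ ∧ ∃ f : X →₀ ℕ, 0 < μ xb f ∧
      2 ≤ ∑ w ∈ f.support, (if brwComm μ w x₀ then f w else 0)) :
    ∃ n : ℕ, 1 ≤ n ∧ StrictConvexOn ℝ (Set.Icc (0 : ℝ) 1)
      (fun t => (brwGF μ)^[n] (fun y => if y = x₀ then t else 1) x₀) := by
  classical
  obtain ⟨xb, hcomm, f, hμf, hsum⟩ := hyp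
  obtain ⟨La, hLa⟩ := brw_reach_lift μ hμ0 hμ1 x₀ hcomm.2
  have base : GRep (fun t => brwH μ x₀ 0 t x₀) 1 := by
    have h : (fun t => brwH μ x₀ 0 t x₀) = fun t => t := by
      funext t; simp [brwH]
    rw [h]; exact GRep_id
  by_cases hA : ∃ w, brwComm μ w x₀ ∧ 2 ≤ f w
  · -- one child site with multiplicity at least two
    obtain ⟨w, hw, hfw⟩ := hA
    obtain ⟨Lw, hLw⟩ := brw_reach_lift μ hμ0 hμ1 x₀ hw.1
    have h1 : GRep (fun t => brwH μ x₀ Lw t w) 1 := by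
      have := hLw 0 1 base
      simpa using this
    have hall : ∀ v, GRep (fun t => brwH μ x₀ Lw t v) (if v = w then 1 else 0) := by
      intro v
      by_cases hv : v = w
      · subst hv; simp only [if_pos rfl]; exact h1
      · simp only [if_neg hv]; exact brw_grep0 μ hμ0 hμ1 x₀ Lw v
    have h2 := brw_step μ hμ0 hμ1 x₀ xb (fun v => if v = w then 1 else 0) hall f hμf
    have h2' : GRep (fun t => brwH μ x₀ (Lw + 1) t xb) 2 := by
      refine h2.mono ?_
      have hwsupp : w ∈ f.support := Finsupp.mem_support_iff.2 (by omega)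
      have hsum2 : (∑ v ∈ f.support, f v * (if v = w then 1 else 0)) = f w * 1 := by
        simp only [mul_ite, mul_zero]
        rw [Finset.sum_ite_eq' f.support w (fun v => f v * 1), if_pos hwsupp]
      rw [hsum2]
      omega
    have h3 := hLa (Lw + 1) 2 h2'
    exact ⟨Lw + 1 + La, by omega, h3.strictConvexOn⟩
  · -- two distinct child sites
    push_neg at hA
    set s' := f.support.filter (fun w => brwComm μ w x₀) with hs'
    have hsum' : (∑ w ∈ s', f w) = ∑ w ∈ f.support, if brwComm μ w x₀ then f w else 0 :=
      by rw [hs', Finset.sum_filter]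
    have hcard : 2 ≤ s'.card := by
      have hle : (∑ w ∈ s', f w) ≤ s'.card := by
        have h := Finset.sum_le_card_nsmul s' (fun w => f w) 1 (fun w hw => by
          have hcw := (Finset.mem_filter.1 hw).2
          have := hA w hcw
          show f w ≤ 1
          omega)
        simp only [smul_eq_mul, mul_one] at h
        exact h
      have h2 : 2 ≤ ∑ w ∈ s', f w := by omega
      exact le_trans h2 hle
    obtain ⟨w₁, hw1s, w₂, hw2s, hne⟩ := Finset.one_lt_card.1 (by omega : 1 < s'.card)
    have hw1 : brwComm μ w₁ x₀ := (Finset.mem_filter.1 hw1s).2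
    have hw2 : brwComm μ w₂ x₀ := (Finset.mem_filter.1 hw2s).2
    have hw1supp : w₁ ∈ f.support := (Finset.mem_filter.1 hw1s).1
    have hw2supp : w₂ ∈ f.support := (Finset.mem_filter.1 hw2s).1
    have hf1 : 1 ≤ f w₁ := Nat.one_le_iff_ne_zero.2 (Finsupp.mem_support_iff.1 hw1supp)
    have hf2 : 1 ≤ f w₂ := Nat.one_le_iff_ne_zero.2 (Finsupp.mem_support_iff.1 hw2supp)
    obtain ⟨L1, hL1⟩ := brw_reach_lift μ hμ0 hμ1 x₀ hw1.1
    obtain ⟨L2, hL2⟩ := brw_reach_lift μ hμ0 hμ1 x₀ hw2.1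
    -- chain for w₁ arriving at time L1 + L2 + La + 1
    have c1 : GRep (fun t => brwH μ x₀ L2 t w₂) 1 := by
      have := hL2 0 1 base; simpa using this
    have c2 : GRep (fun t => brwH μ x₀ (L2 + 1) t xb) 1 :=
      brw_edgeF μ hμ0 hμ1 x₀ f hμf hf2 c1
    have c3 := hLa (L2 + 1) 1 c2
    have c4 := hL1 (L2 + 1 + La) 1 c3
    have c4' : GRep (fun t => brwH μ x₀ (L1 + L2 + La + 1) t w₁) 1 := by
      have heq : L2 + 1 + La + L1 = L1 + L2 + La + 1 := by omega
      rw [heq] at c4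
      exact c4
    -- chain for w₂ arriving at the same time
    have d1 : GRep (fun t => brwH μ x₀ L1 t w₁) 1 := by
      have := hL1 0 1 base; simpa using this
    have d2 : GRep (fun t => brwH μ x₀ (L1 + 1) t xb) 1 :=
      brw_edgeF μ hμ0 hμ1 x₀ f hμf hf1 d1
    have d3 := hLa (L1 + 1) 1 d2
    have d4 := hL2 (L1 + 1 + La) 1 d3
    have d4' : GRep (fun t => brwH μ x₀ (L1 + L2 + La + 1) t w₂) 1 := by
      have heq : L1 + 1 + La + L2 = L1 + L2 + La + 1 := by omega
      rw [heq] at d4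
      exact d4
    -- branching step at xb
    set m := L1 + L2 + La + 1 with hm
    set κ : X → ℕ := fun v => if v = w₁ then 1 else if v = w₂ then 1 else 0 with hκ
    have hall : ∀ v, GRep (fun t => brwH μ x₀ m t v) (κ v) := by
      intro v
      by_cases hv1 : v = w₁
      · subst hv1; simp only [hκ, if_pos rfl]; exact c4'
      · by_cases hv2 : v = w₂
        · subst hv2; simp only [hκ, if_neg hv1, if_pos rfl]; exact d4'
        · simp only [hκ, if_neg hv1, if_neg hv2]
          exact brw_grep0 μ hμ0 hμ1 x₀ m v
    have h2 := brw_step μ hμ0 hμ1 x₀ xb κ hall f hμf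
    have h2' : GRep (fun t => brwH μ x₀ (m + 1) t xb) 2 := by
      refine h2.mono ?_
      have hsub : ({w₁, w₂} : Finset X) ⊆ f.support := by
        intro v hv
        rcases Finset.mem_insert.1 hv with h | h
        · subst h; exact hw1supp
        · rw [Finset.mem_singleton.1 h]; exact hw2supp
      have hmono : ∑ v ∈ ({w₁, w₂} : Finset X), f v * κ v
          ≤ ∑ v ∈ f.support, f v * κ v :=
        Finset.sum_le_sum_of_subset hsub
      rw [Finset.sum_pair hne] at hmono
      have hκ1 : κ w₁ = 1 := by simp [hκ]
      have hκ2 : κ w₂ = 1 := by simp [hκ, hne.symm]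
      rw [hκ1, hκ2] at hmono
      omega
    have h3 := hLa (m + 1) 2 h2'
    exact ⟨m + 1 + La, by omega, h3.strictConvexOn⟩
end

section
/- Remark 4.4 (a generating function of an irreducible BRW with at least three fixed points): There exist a sequence (p_n)_{n≥1} with p_n ∈ (0,1) for all n ≥ 1 and a sequence (z_n)_{n∈ℕ} with 1/3 < z_n < z_{n+1} < 1 for all n ∈ ℕ, such that z_0 = (3/4) z_1² + 1/4 and z_n = (3/4) (p_n z_{n+1} + (1 − p_n) z_{n−1})² + 1/4 for all n ≥ 1, and moreover lim_{n→∞} p_n = 1 and lim_{n→∞} z_n = 1. Consequently, the map G : [0,1]^ℕ → [0,1]^ℕ defined by G(z|0) = (3/4) z(1)² + 1/4 and G(z|n) = (3/4)(p_n z(n+1) + (1 − p_n) z(n−1))² + 1/4 for n ≥ 1 has at least three distinct fixed points in [0,1]^ℕ: the constant vector 1/3, the vector z = (z_n), and the constant vector 1. -/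
open Filter

/-- The generating function of Remark 4.4: `G(z|0) = (3/4)z(1)² + 1/4` and
`G(z|n) = (3/4)(p_n z(n+1) + (1-p_n) z(n-1))² + 1/4` for `n ≥ 1`. -/
noncomputable def remG (p : ℕ → ℝ) (z : ℕ → ℝ) : ℕ → ℝ
  | 0 => 3 / 4 * z 1 ^ 2 + 1 / 4
  | n + 1 => 3 / 4 * (p (n + 1) * z (n + 2) + (1 - p (n + 1)) * z n) ^ 2 + 1 / 4

/-- The auxiliary quantity `Q n = 1/(n+2)!`. -/
noncomputable def remQ (n : ℕ) : ℝ := ((Nat.factorial (n + 2) : ℝ))⁻¹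

/-- The fixed point sequence: `z 0 = 7/16`, `z (n+1) = 1 - 1/(n+2)!`. -/
noncomputable def remZ : ℕ → ℝ
  | 0 => 7 / 16
  | n + 1 => 1 - remQ n

/-- `w n = √((4 z n - 1)/3)`. -/
noncomputable def remW (n : ℕ) : ℝ := Real.sqrt ((4 * remZ n - 1) / 3)

/-- The displacement probabilities. -/
noncomputable def remP : ℕ → ℝ
  | 0 => 1 / 2
  | n + 1 => (remW (n + 1) - remZ n) / (remZ (n + 2) - remZ n)

lemma remQ_pos (n : ℕ) : 0 < remQ n := by
  have : (0 : ℝ) < (Nat.factorial (n + 2) : ℝ) := by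
    exact_mod_cast Nat.factorial_pos _
  exact inv_pos.mpr this

lemma remQ_le_half (n : ℕ) : remQ n ≤ 1 / 2 := by
  have h2 : (2 : ℝ) ≤ (Nat.factorial (n + 2) : ℝ) := by
    exact_mod_cast Nat.self_le_factorial (n + 2) |>.trans' (by omega)
  rw [remQ, inv_le_comm₀ (by positivity) (by norm_num)]
  linarith

lemma remQ_succ (n : ℕ) : remQ (n + 1) = remQ n / (n + 3) := by
  have h : Nat.factorial (n + 3) = (n + 3) * Nat.factorial (n + 2) :=
    Nat.factorial_succ (n + 2)
  have h3 : ((n : ℝ) + 3) ≠ 0 := by positivity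
  have hf : ((Nat.factorial (n + 2) : ℝ)) ≠ 0 := by
    exact_mod_cast (Nat.factorial_pos _).ne'
  rw [remQ, remQ]
  push_cast [h]
  field_simp

lemma remQ_succ_lt (n : ℕ) : remQ (n + 1) < remQ n := by
  rw [remQ_succ]
  have := remQ_pos n
  rw [div_lt_iff₀ (by positivity)]
  nlinarith

lemma remQ_le_inv (n : ℕ) : remQ n ≤ ((n : ℝ) + 2)⁻¹ := by
  have h : ((n : ℝ) + 2) ≤ (Nat.factorial (n + 2) : ℝ) := by
    exact_mod_cast Nat.self_le_factorial (n + 2)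
  exact inv_anti₀ (by positivity) h

/-- bounds on `b = 1 - √(1 - 4x/3)` for `0 < x ≤ 3/4`. -/
lemma rem_sqrt_bounds {x : ℝ} (hx0 : 0 < x) (hx1 : x ≤ 3 / 4) :
    2 / 3 * x < 1 - Real.sqrt (1 - 4 * x / 3) ∧
      1 - Real.sqrt (1 - 4 * x / 3) ≤ 4 / 3 * x := by
  have harg : (0 : ℝ) ≤ 1 - 4 * x / 3 := by linarith
  constructor
  · have h1 : Real.sqrt (1 - 4 * x / 3) < 1 - 2 / 3 * x := by
      rw [Real.sqrt_lt' (by linarith)]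
      nlinarith
    linarith
  · have h2 : 1 - 4 / 3 * x ≤ Real.sqrt (1 - 4 * x / 3) := by
      rcases le_or_gt (1 - 4 / 3 * x) 0 with h | h
      · exact h.trans (Real.sqrt_nonneg _)
      · rw [Real.le_sqrt' h]
        nlinarith
    linarith

lemma remW_arg (n : ℕ) : (4 * remZ (n + 1) - 1) / 3 = 1 - 4 * remQ n / 3 := by
  show (4 * (1 - remQ n) - 1) / 3 = _
  ring

lemma remW_bounds (n : ℕ) :
    2 / 3 * remQ n < 1 - remW (n + 1) ∧ 1 - remW (n + 1) ≤ 4 / 3 * remQ n := by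
  have := rem_sqrt_bounds (remQ_pos n) ((remQ_le_half n).trans (by norm_num))
  rw [remW, remW_arg]
  exact this

lemma remW_sq (n : ℕ) : remW (n + 1) ^ 2 = (4 * remZ (n + 1) - 1) / 3 := by
  rw [remW]
  apply Real.sq_sqrt
  rw [remW_arg]
  have := remQ_le_half n
  linarith

/-- key inequality: `z (n-1) < w n < z (n+1)` for `n ≥ 1`. -/
lemma remW_between (n : ℕ) :
    remZ n < remW (n + 1) ∧ remW (n + 1) < remZ (n + 2) := by
  obtain ⟨hb1, hb2⟩ := remW_bounds n
  constructor
  · -- z n < w (n+1), i.e. 1 - w(n+1) < 1 - z n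
    cases n with
    | zero =>
      -- 1 - z 0 = 9/16; need 1 - remW 1 < 9/16, use exact sqrt bound:
      -- remW 1 = √(1/3) > 7/16
      have harg : (4 * remZ 1 - 1) / 3 = 1 / 3 := by
        show (4 * (1 - remQ 0) - 1) / 3 = 1 / 3
        have : remQ 0 = 1 / 2 := by norm_num [remQ, Nat.factorial]
        rw [this]; norm_num
      have : (7 : ℝ) / 16 < Real.sqrt (1 / 3) := by
        rw [show (7:ℝ)/16 = Real.sqrt ((7/16)^2) by rw [Real.sqrt_sq (by norm_num)]]
        apply Real.sqrt_lt_sqrt (by positivity)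
        norm_num
      show remZ 0 < remW 1
      rw [remW, harg]
      show (7 : ℝ) / 16 < _
      exact this
    | succ m =>
      -- 1 - z (m+1) = Q m = (m+4) * Q (m+1) ≥ 4 Q (m+1) > 4/3 Q (m+1) ≥ 1 - w (m+2)
      have hQ : remQ (m + 1) = remQ m / (m + 3) := remQ_succ m
      have hQm := remQ_pos m
      have h4 : 4 / 3 * remQ (m + 1) < remQ m := by
        rw [hQ, ← mul_div_assoc, div_lt_iff₀ (by positivity : (0:ℝ) < (m:ℝ)+3)]
        nlinarith [remQ_pos m, (Nat.cast_nonneg m : (0:ℝ) ≤ (m:ℝ))]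
      have : 1 - remW (m + 2) < remQ m := lt_of_le_of_lt hb2 h4
      show (1 : ℝ) - remQ m < remW (m + 2)
      linarith
  · -- w (n+1) < z (n+2), i.e. Q (n+1) < 1 - w (n+1)
    have hQ : remQ (n + 1) = remQ n / (n + 3) := remQ_succ n
    have hQn := remQ_pos n
    have : remQ (n + 1) < 2 / 3 * remQ n := by
      rw [hQ, div_lt_iff₀ (by positivity)]
      nlinarith
    show remW (n + 1) < 1 - remQ (n + 1)
    linarith

lemma remZ_lt_succ (n : ℕ) : remZ n < remZ (n + 1) := by
  cases n with
  | zero =>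
    show (7 : ℝ) / 16 < 1 - remQ 0
    have : remQ 0 = 1 / 2 := by norm_num [remQ, Nat.factorial]
    rw [this]; norm_num
  | succ m =>
    show (1 : ℝ) - remQ m < 1 - remQ (m + 1)
    have := remQ_succ_lt m
    linarith

lemma remZ_bounds (n : ℕ) : 1 / 3 < remZ n ∧ remZ n < 1 := by
  cases n with
  | zero => constructor <;> norm_num [remZ]
  | succ m =>
    have h1 := remQ_pos m
    have h2 := remQ_le_half m
    constructor
    · show (1 : ℝ) / 3 < 1 - remQ m; linarith
    · show (1 : ℝ) - remQ m < 1; linarith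

lemma remZ_denom_pos (n : ℕ) : 0 < remZ (n + 2) - remZ n := by
  have h1 := remZ_lt_succ n
  have h2 := remZ_lt_succ (n + 1)
  linarith

lemma remP_mem (n : ℕ) : remP (n + 1) ∈ Set.Ioo (0 : ℝ) 1 := by
  obtain ⟨h1, h2⟩ := remW_between n
  have hd := remZ_denom_pos n
  constructor
  · exact div_pos (by linarith) hd
  · rw [remP, div_lt_one hd]; linarith

lemma remP_combo (n : ℕ) :
    remP (n + 1) * remZ (n + 2) + (1 - remP (n + 1)) * remZ n = remW (n + 1) := by
  have hd := (remZ_denom_pos n).ne'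
  rw [remP]
  field_simp
  ring

lemma rem_recursion (n : ℕ) :
    remZ (n + 1) =
      3 / 4 * (remP (n + 1) * remZ (n + 2) + (1 - remP (n + 1)) * remZ n) ^ 2 + 1 / 4 := by
  rw [remP_combo, remW_sq]
  ring

lemma remZ_zero_eq : remZ 0 = 3 / 4 * remZ 1 ^ 2 + 1 / 4 := by
  have h1 : remZ 1 = (1 : ℝ) / 2 := by
    show (1 : ℝ) - remQ 0 = 1 / 2
    have : remQ 0 = 1 / 2 := by norm_num [remQ, Nat.factorial]
    rw [this]; norm_num
  rw [h1]
  norm_num [remZ]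

lemma remZ_tendsto : Tendsto remZ atTop (nhds 1) := by
  have hQ : Tendsto remQ atTop (nhds 0) := by
    apply tendsto_of_tendsto_of_tendsto_of_le_of_le' tendsto_const_nhds
      (tendsto_const_div_atTop_nhds_zero_nat 1)
    · exact Eventually.of_forall fun n => (remQ_pos n).le
    · filter_upwards [eventually_ge_atTop 1] with n hn
      have := remQ_le_inv n
      rw [one_div]
      refine this.trans ?_
      apply inv_anti₀
      · exact_mod_cast Nat.pos_of_ne_zero (by omega)
      · push_cast; linarith
  have hQ' : Tendsto (fun n : ℕ => remQ (n - 1)) atTop (nhds 0) :=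
    hQ.comp (tendsto_sub_atTop_nat 1)
  have h1 : Tendsto (fun n : ℕ => 1 - remQ (n - 1)) atTop (nhds 1) := by
    have := (tendsto_const_nhds (x := (1:ℝ)) (f := atTop (α := ℕ))).sub hQ'
    simpa using this
  apply h1.congr'
  filter_upwards [eventually_ge_atTop 1] with n hn
  obtain ⟨m, rfl⟩ := Nat.exists_eq_add_of_le hn
  have e1 : 1 + m - 1 = m := by omega
  have e2 : 1 + m = m + 1 := by omega
  rw [e1, e2]
  rfl

lemma remP_lower (n : ℕ) : 1 - 4 / (3 * ((n : ℝ) + 1)) ≤ remP (n + 2) := by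
  -- 1 - p = (z(n+3) - w(n+2)) / (z(n+3) - z(n+1))
  -- numerator ≤ 1 - w(n+2) ≤ 4/3 Q(n+1); denominator = Q n - Q(n+2) ≥ (n+1) Q(n+1)
  obtain ⟨hb1, hb2⟩ := remW_bounds (n + 1)
  obtain ⟨hw1, hw2⟩ := remW_between (n + 1)
  have hd := remZ_denom_pos (n + 1)
  have hQ1 : remQ (n + 1) = remQ n / (n + 3) := remQ_succ n
  have hQ2 : remQ (n + 2) = remQ (n + 1) / ((n : ℝ) + 4) := by
    have := remQ_succ (n + 1)
    push_cast at this
    convert this using 2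
    ring
  have hQp := remQ_pos (n + 1)
  have hQp0 := remQ_pos n
  -- denominator: z(n+3) - z(n+1) = Q n - Q (n+2)
  have hden : remZ (n + 3) - remZ (n + 1) = remQ n - remQ (n + 2) := by
    show (1 - remQ (n + 2)) - (1 - remQ n) = _
    ring
  have hdenge : ((n : ℝ) + 1) * remQ (n + 1) ≤ remZ (n + 3) - remZ (n + 1) := by
    rw [hden, hQ1, hQ2, hQ1, div_div]
    have expand : remQ n - remQ n / (((n:ℝ) + 3) * ((n:ℝ) + 4))
        - ((n:ℝ) + 1) * (remQ n / ((n:ℝ) + 3))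
        = remQ n * ((2 * (n:ℝ) + 7) / (((n:ℝ) + 3) * ((n:ℝ) + 4))) := by
      field_simp
      ring
    have hpos : 0 ≤ remQ n * ((2 * (n:ℝ) + 7) / (((n:ℝ) + 3) * ((n:ℝ) + 4))) := by
      positivity
    linarith
  -- numerator bound
  have hnum : remZ (n + 3) - remW (n + 2) ≤ 4 / 3 * remQ (n + 1) := by
    have : remZ (n + 3) - remW (n + 2) ≤ 1 - remW (n + 2) := by
      have := (remZ_bounds (n + 3)).2
      linarith
    linarith
  have h1p : 1 - remP (n + 2) = (remZ (n + 3) - remW (n + 2)) / (remZ (n + 3) - remZ (n + 1)) := by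
    rw [remP]
    field_simp
    ring
  have hfrac : (remZ (n + 3) - remW (n + 2)) / (remZ (n + 3) - remZ (n + 1))
      ≤ 4 / (3 * ((n : ℝ) + 1)) := by
    rw [div_le_div_iff₀ hd (by positivity)]
    calc (remZ (n + 3) - remW (n + 2)) * (3 * ((n:ℝ) + 1))
        ≤ (4 / 3 * remQ (n + 1)) * (3 * ((n:ℝ) + 1)) := by
          apply mul_le_mul_of_nonneg_right hnum (by positivity)
      _ = 4 * (((n:ℝ) + 1) * remQ (n + 1)) := by ring
      _ ≤ 4 * (remZ (n + 3) - remZ (n + 1)) := by linarith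
  have := h1p ▸ hfrac
  linarith

lemma remP_tendsto : Tendsto remP atTop (nhds 1) := by
  apply tendsto_of_tendsto_of_tendsto_of_le_of_le'
    (g := fun n : ℕ => 1 - 4 / (3 * ((n : ℝ) - 1))) (h := fun _ : ℕ => (1 : ℝ))
  · have h0 : Tendsto (fun n : ℕ => 4 / (3 * ((n : ℝ) - 1))) atTop (nhds 0) := by
      have h1 : Tendsto (fun n : ℕ => 3 * ((n : ℝ) - 1)) atTop atTop := by
        apply Tendsto.const_mul_atTop (by norm_num)
        exact tendsto_natCast_atTop_atTop.atTop_add tendsto_const_nhds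
      exact Tendsto.div_atTop tendsto_const_nhds h1
    have := (tendsto_const_nhds (x := (1:ℝ)) (f := atTop (α := ℕ))).sub h0
    simpa using this
  · exact tendsto_const_nhds
  · filter_upwards [eventually_ge_atTop 2] with n hn
    obtain ⟨m, rfl⟩ := Nat.exists_eq_add_of_le hn
    have h := remP_lower m
    have e1 : 2 + m = m + 2 := by omega
    rw [e1]
    have e2 : ((m + 2 : ℕ) : ℝ) - 1 = (m : ℝ) + 1 := by push_cast; ring
    rw [e2]
    exact h
  · filter_upwards [eventually_ge_atTop 1] with n hn
    obtain ⟨m, rfl⟩ := Nat.exists_eq_add_of_le hn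
    have : remP (1 + m) = remP (m + 1) := by rw [Nat.add_comm]
    rw [this]
    exact (remP_mem m).2.le

/-- Remark 4.4: there exist `(p_n)` and `(z_n)` as described, providing a generating
function of an irreducible BRW with at least three distinct fixed points in
`[0,1]^ℕ`: the constant `1/3`, the vector `z`, and the constant `1`. -/
theorem brw_three_fixed_points :
    ∃ p z : ℕ → ℝ,
      (∀ n : ℕ, 1 ≤ n → p n ∈ Set.Ioo (0 : ℝ) 1) ∧
      (∀ n : ℕ, 1 / 3 < z n ∧ z n < z (n + 1) ∧ z (n + 1) < 1) ∧
      z 0 = 3 / 4 * z 1 ^ 2 + 1 / 4 ∧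
      (∀ n : ℕ, 1 ≤ n →
        z n = 3 / 4 * (p n * z (n + 1) + (1 - p n) * z (n - 1)) ^ 2 + 1 / 4) ∧
      Tendsto p atTop (nhds 1) ∧ Tendsto z atTop (nhds 1) ∧
      remG p (fun _ => 1 / 3) = (fun _ => 1 / 3) ∧
      remG p z = z ∧
      remG p (fun _ => 1) = (fun _ => 1) ∧
      (fun _ : ℕ => (1 : ℝ) / 3) ≠ z ∧ z ≠ (fun _ => 1) ∧
      (fun _ : ℕ => (1 : ℝ) / 3) ≠ (fun _ => 1) := by
  refine ⟨remP, remZ, ?_, ?_, remZ_zero_eq, ?_, remP_tendsto, remZ_tendsto, ?_, ?_, ?_, ?_, ?_, ?_⟩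
  · intro n hn
    obtain ⟨m, rfl⟩ := Nat.exists_eq_add_of_le hn
    rw [Nat.add_comm]
    exact remP_mem m
  · intro n
    exact ⟨(remZ_bounds n).1, remZ_lt_succ n, (remZ_bounds (n + 1)).2⟩
  · intro n hn
    obtain ⟨m, rfl⟩ := Nat.exists_eq_add_of_le hn
    rw [Nat.add_comm 1 m]
    simpa using rem_recursion m
  · funext n
    cases n with
    | zero => show (3:ℝ)/4 * (1/3)^2 + 1/4 = 1/3; norm_num
    | succ m =>
      show (3:ℝ)/4 * (remP (m+1) * (1/3) + (1 - remP (m+1)) * (1/3))^2 + 1/4 = 1/3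
      ring_nf
  · funext n
    cases n with
    | zero => exact remZ_zero_eq.symm
    | succ m => exact (rem_recursion m).symm
  · funext n
    cases n with
    | zero => show (3:ℝ)/4 * 1^2 + 1/4 = 1; norm_num
    | succ m =>
      show (3:ℝ)/4 * (remP (m+1) * 1 + (1 - remP (m+1)) * 1)^2 + 1/4 = 1
      ring_nf
  · intro h
    have := congrFun h 0
    norm_num [remZ] at this
  · intro h
    have := congrFun h 0
    norm_num [remZ] at this
  · intro h
    have := congrFun h 0
    norm_num at this
end
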